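/- arXiv:2102.08244 — 10 statements merged into one kernel-verified Lean document; each statement's English description precedes it below -/
import Mathlib

section
/- Let X and X' be two datasets of size n (multisets of n real numbers in [a,b]) that are swap-neighbors, i.e., they differ in at most one element. Then for every o = (o_1,...,o_m) in the output space O↗, |u_Q(X,o) − u_Q(X',o)| ≤ 2. In other words, the utility function u_Q has L1 sensitivity at most 2 under the swap notion of neighboring datasets, regardless of the number m of quantiles. -/
open scoped Classical
open Finset

/-- Number of points of the multiset `X` in the half-open interval `[u, v)`. -/
noncomputable def cnt (X : Multiset ℝ) (u v : ℝ) : ℕ :=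
  Multiset.card (X.filter (fun x => u ≤ x ∧ x < v))

/-- Extension of the output vector `o = (o_1, …, o_m)` by `o_0 = a` and `o_{m+1} = b + 1`. -/
noncomputable def oext (a b : ℝ) (m : ℕ) (o : Fin m → ℝ) (j : ℕ) : ℝ :=
  if h : 1 ≤ j ∧ j ≤ m then o ⟨j - 1, by omega⟩ else if j = 0 then a else b + 1

/-- The JointExp utility `u_Q(X, o) = -∑_{j=1}^{m+1} |n(o_{j-1}, o_j; X) - (q_j - q_{j-1})·N|`. -/
noncomputable def uQ (a b : ℝ) (m N : ℕ) (q : ℕ → ℝ) (X : Multiset ℝ) (o : Fin m → ℝ) : ℝ :=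
  -∑ j ∈ Finset.range (m + 1),
    |(cnt X (oext a b m o j) (oext a b m o (j + 1)) : ℝ) - (q (j + 1) - q j) * N|

lemma cnt_cons (Y : Multiset ℝ) (y u v : ℝ) :
    cnt (y ::ₘ Y) u v = cnt Y u v + (if u ≤ y ∧ y < v then 1 else 0) := by
  unfold cnt
  rw [Multiset.filter_cons]
  split <;> simp [add_comm]

/-- The utility function `u_Q` has L1 sensitivity at most `2` under the swap notion of
neighboring datasets, regardless of the number `m` of quantiles. -/
theorem uQ_swap_sensitivity (a b : ℝ) (hab : a < b) (n m : ℕ) (hn : 1 ≤ n) (hm : 1 ≤ m)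
    (q : ℕ → ℝ) (hq0 : q 0 = 0) (hqtop : q (m + 1) = 1)
    (hqmono : ∀ j ≤ m, q j < q (j + 1))
    (X X' : Multiset ℝ)
    (hXcard : Multiset.card X = n) (hX'card : Multiset.card X' = n)
    (hXmem : ∀ x ∈ X, a ≤ x ∧ x ≤ b) (hX'mem : ∀ x ∈ X', a ≤ x ∧ x ≤ b)
    (hneighbor : ∃ (Y : Multiset ℝ) (y y' : ℝ), X = y ::ₘ Y ∧ X' = y' ::ₘ Y)
    (o : Fin m → ℝ) (homono : Monotone o)
    (hoa : a ≤ o ⟨0, by omega⟩) (hob : o ⟨m - 1, by omega⟩ ≤ b) :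
    |uQ a b m n q X o - uQ a b m n q X' o| ≤ 2 := by
  obtain ⟨Y, y, y', hX, hX'⟩ := hneighbor
  subst hX hX'
  unfold uQ
  set f : ℕ → ℝ := oext a b m o with hfdef
  -- monotonicity of the extended output vector
  have hf : Monotone f := by
    apply monotone_nat_of_le_succ
    intro j
    show oext a b m o j ≤ oext a b m o (j + 1)
    unfold oext
    by_cases h1 : 1 ≤ j ∧ j ≤ m
    · rw [dif_pos h1]
      by_cases h2 : 1 ≤ j + 1 ∧ j + 1 ≤ m
      · rw [dif_pos h2]
        exact homono (Fin.mk_le_mk.mpr (by omega))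
      · rw [dif_neg h2, if_neg (by omega)]
        have hjm : j = m := by omega
        subst hjm
        linarith [hob]
    · rw [dif_neg h1]
      by_cases h0 : j = 0
      · rw [if_pos h0]
        have h2 : 1 ≤ j + 1 ∧ j + 1 ≤ m := by omega
        rw [dif_pos h2]
        subst h0
        exact hoa
      · rw [if_neg h0, dif_neg (by omega), if_neg (by omega)]
  -- each point lies in at most one interval
  have hind : ∀ z : ℝ,
      ∑ j ∈ Finset.range (m + 1), (if f j ≤ z ∧ z < f (j + 1) then (1 : ℝ) else 0) ≤ 1 := by
    intro z
    have hkey : ∀ i k : ℕ, i < k → f i ≤ z ∧ z < f (i + 1) → f k ≤ z ∧ z < f (k + 1) → False := by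
      intro i k hik hi hk
      have : z < z := lt_of_lt_of_le hi.2 (le_trans (hf (by omega : i + 1 ≤ k)) hk.1)
      exact lt_irrefl z this
    have hcard : ((Finset.range (m + 1)).filter
        (fun j => f j ≤ z ∧ z < f (j + 1))).card ≤ 1 := by
      refine Finset.card_le_one.mpr ?_
      intro i hi k hk
      simp only [Finset.mem_filter] at hi hk
      by_contra hne
      rcases Nat.lt_or_ge i k with h | h
      · exact hkey i k h hi.2 hk.2
      · exact hkey k i (by omega) hk.2 hi.2
    calc ∑ j ∈ Finset.range (m + 1), (if f j ≤ z ∧ z < f (j + 1) then (1 : ℝ) else 0)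
        = ((Finset.range (m + 1)).filter (fun j => f j ≤ z ∧ z < f (j + 1))).card := by
          rw [Finset.sum_boole]
      _ ≤ 1 := by exact_mod_cast hcard
  -- counting with an extra point
  have hcnt : ∀ (z : ℝ) (j : ℕ), (cnt (z ::ₘ Y) (f j) (f (j + 1)) : ℝ)
      = (cnt Y (f j) (f (j + 1)) : ℝ) + (if f j ≤ z ∧ z < f (j + 1) then (1 : ℝ) else 0) := by
    intro z j
    rw [cnt_cons]
    push_cast
    split <;> simp
  rw [neg_sub_neg, ← Finset.sum_sub_distrib]
  calc |∑ j ∈ Finset.range (m + 1),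
          (|(cnt (y' ::ₘ Y) (f j) (f (j + 1)) : ℝ) - (q (j + 1) - q j) * n|
          - |(cnt (y ::ₘ Y) (f j) (f (j + 1)) : ℝ) - (q (j + 1) - q j) * n|)|
      ≤ ∑ j ∈ Finset.range (m + 1),
          |(|(cnt (y' ::ₘ Y) (f j) (f (j + 1)) : ℝ) - (q (j + 1) - q j) * n|
          - |(cnt (y ::ₘ Y) (f j) (f (j + 1)) : ℝ) - (q (j + 1) - q j) * n|)| :=
        Finset.abs_sum_le_sum_abs _ _
    _ ≤ ∑ j ∈ Finset.range (m + 1),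
          ((if f j ≤ y' ∧ y' < f (j + 1) then (1 : ℝ) else 0)
          + (if f j ≤ y ∧ y < f (j + 1) then (1 : ℝ) else 0)) := by
        refine Finset.sum_le_sum ?_
        intro j hj
        have h1 := abs_abs_sub_abs_le_abs_sub
          ((cnt (y' ::ₘ Y) (f j) (f (j + 1)) : ℝ) - (q (j + 1) - q j) * n)
          ((cnt (y ::ₘ Y) (f j) (f (j + 1)) : ℝ) - (q (j + 1) - q j) * n)
        have h2 : (cnt (y' ::ₘ Y) (f j) (f (j + 1)) : ℝ) - (q (j + 1) - q j) * n
            - ((cnt (y ::ₘ Y) (f j) (f (j + 1)) : ℝ) - (q (j + 1) - q j) * n)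
            = (if f j ≤ y' ∧ y' < f (j + 1) then (1 : ℝ) else 0)
            - (if f j ≤ y ∧ y < f (j + 1) then (1 : ℝ) else 0) := by
          rw [hcnt y, hcnt y']; ring
        refine le_trans h1 ?_
        rw [h2]
        refine le_trans (abs_sub _ _) ?_
        gcongr <;> split <;> norm_num
    _ = (∑ j ∈ Finset.range (m + 1), (if f j ≤ y' ∧ y' < f (j + 1) then (1 : ℝ) else 0))
        + ∑ j ∈ Finset.range (m + 1), (if f j ≤ y ∧ y < f (j + 1) then (1 : ℝ) else 0) :=
        Finset.sum_add_distrib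
    _ ≤ 1 + 1 := add_le_add (hind y') (hind y)
    _ = 2 := by norm_num
end

section
/- For every nondecreasing index sequence s = (i_1,...,i_m) ∈ S↗, the m-dimensional Lebesgue measure of the cell g_O(s) = {o ∈ O↗ : x_{i_j} ≤ o_j < x_{i_j + 1} for all j = 1,...,m} equals (∏_{j=1}^m (x_{i_j + 1} − x_{i_j})) / γ(s). -/
open scoped Classical
open Finset MeasureTheory
open scoped ENNReal


lemma hyperplane_null {ι : Type*} [Fintype ι] [DecidableEq ι] {j k : ι} (hjk : j ≠ k) :
    volume {o : ι → ℝ | o j = o k} = 0 := by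
  have h1 : {o : ι → ℝ | o j = o k} =
      (LinearMap.ker ((LinearMap.proj j : (ι → ℝ) →ₗ[ℝ] ℝ) - LinearMap.proj k) : Set (ι → ℝ)) := by
    ext o
    simp [LinearMap.mem_ker, sub_eq_zero, LinearMap.proj]
  rw [h1]
  refine Measure.addHaar_submodule _ _ ?_
  intro h
  have h2 : (Pi.single j (1:ℝ)) ∈
      LinearMap.ker ((LinearMap.proj j : (ι → ℝ) →ₗ[ℝ] ℝ) - LinearMap.proj k) := by
    rw [h]; trivial
  simp [LinearMap.mem_ker, LinearMap.proj, sub_eq_zero, Pi.single_eq_of_ne hjk.symm] at h2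

lemma ties_null {ι : Type*} [Fintype ι] [DecidableEq ι] :
    volume {o : ι → ℝ | ∃ j k, j ≠ k ∧ o j = o k} = 0 := by
  have h1 : {o : ι → ℝ | ∃ j k, j ≠ k ∧ o j = o k}
      = ⋃ (j : ι) (k : ι) (_ : j ≠ k), {o : ι → ℝ | o j = o k} := by
    ext o; simp
  rw [h1]
  refine measure_iUnion_null fun j => measure_iUnion_null fun k => measure_iUnion_null fun h => ?_
  exact hyperplane_null h

lemma measurableSet_monotone {ι : Type*} [Fintype ι] [LinearOrder ι] :
    MeasurableSet {o : ι → ℝ | Monotone o} := by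
  have h : {o : ι → ℝ | Monotone o} = ⋂ (j) (k) (_ : j ≤ k), {o : ι → ℝ | o j ≤ o k} := by
    ext o; simp only [Set.mem_iInter, Set.mem_setOf_eq]; exact ⟨fun h j k hjk => h hjk, fun h a b hab => h a b hab⟩
  rw [h]
  exact MeasurableSet.iInter fun j => .iInter fun k => .iInter fun _ =>
    measurableSet_le (measurable_pi_apply _) (measurable_pi_apply _)

lemma measurableSet_strictMono {ι : Type*} [Fintype ι] [LinearOrder ι] :
    MeasurableSet {o : ι → ℝ | StrictMono o} := by
  have h : {o : ι → ℝ | StrictMono o} = ⋂ (j) (k) (_ : j < k), {o : ι → ℝ | o j < o k} := by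
    ext o; simp only [Set.mem_iInter, Set.mem_setOf_eq]; exact ⟨fun h j k hjk => h hjk, fun h a b hab => h a b hab⟩
  rw [h]
  exact MeasurableSet.iInter fun j => .iInter fun k => .iInter fun _ =>
    measurableSet_lt (measurable_pi_apply _) (measurable_pi_apply _)

lemma volume_block {ι : Type*} [Fintype ι] [LinearOrder ι] {l u : ℝ} (hlu : l ≤ u) :
    volume {o : ι → ℝ | Monotone o ∧ ∀ j, l ≤ o j ∧ o j < u}
      = ENNReal.ofReal ((u - l) ^ (Fintype.card ι) / (Nat.factorial (Fintype.card ι))) := by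
  set c := Fintype.card ι with hc
  set B : Set (ι → ℝ) := Set.pi Set.univ (fun _ => Set.Ico l u) with hBdef
  have hBmem : ∀ o : ι → ℝ, o ∈ B ↔ ∀ j, l ≤ o j ∧ o j < u := by
    intro o; simp [hBdef, Set.mem_pi, Set.mem_Ico]
  set T : Set (ι → ℝ) := {o | ∃ j k, j ≠ k ∧ o j = o k} with hTdef
  set S : Equiv.Perm ι → Set (ι → ℝ) :=
    fun σ => {o | StrictMono (o ∘ σ) ∧ ∀ j, l ≤ o j ∧ o j < u} with hSdef
  have hBmeas : MeasurableSet B := MeasurableSet.univ_pi fun _ => measurableSet_Ico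
  have hcomp_meas : ∀ σ : Equiv.Perm ι, Measurable (fun o : ι → ℝ => o ∘ σ) :=
    fun σ => measurable_pi_lambda _ fun j => measurable_pi_apply _
  have hSmeas : ∀ σ : Equiv.Perm ι, MeasurableSet (S σ) := by
    intro σ
    have : S σ = ((fun o : ι → ℝ => o ∘ σ) ⁻¹' {o | StrictMono o}) ∩ B := by
      ext o; simp [hSdef, hBmem o, Set.mem_setOf_eq]
    rw [this]
    exact ((hcomp_meas σ) measurableSet_strictMono).inter hBmeas
  have hMP : ∀ σ : Equiv.Perm ι, MeasurePreserving (fun o : ι → ℝ => o ∘ σ) volume volume := by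
    intro σ
    have h := volume_measurePreserving_piCongrLeft (fun _ : ι => ℝ) (σ.symm : ι ≃ ι)
    have he : ⇑(MeasurableEquiv.piCongrLeft (fun _ : ι => ℝ) (σ.symm : ι ≃ ι))
        = fun (o : ι → ℝ) => o ∘ σ := by
      funext g
      funext i
      rw [MeasurableEquiv.coe_piCongrLeft, show i = σ.symm (σ i) by simp,
        Equiv.piCongrLeft_apply_apply]
      simp
    rwa [he] at h
  have hSvol : ∀ σ : Equiv.Perm ι, volume (S σ) = volume (S 1) := by
    intro σ
    have hpre : S σ = (fun o : ι → ℝ => o ∘ σ) ⁻¹' (S 1) := by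
      ext o
      simp only [hSdef, Set.mem_preimage, Set.mem_setOf_eq, Equiv.Perm.coe_one, Function.comp_id,
        CompTriple.comp_eq]
      constructor
      · rintro ⟨h1, h2⟩; exact ⟨h1, fun j => h2 (σ j)⟩
      · rintro ⟨h1, h2⟩; exact ⟨h1, fun j => by simpa using h2 (σ.symm j)⟩
    rw [hpre]
    exact (hMP σ).measure_preimage (hSmeas 1).nullMeasurableSet
  have hdisj : Pairwise (Function.onFun Disjoint S) := by
    intro σ τ hστ
    rw [Function.onFun, Set.disjoint_left]
    rintro o ⟨h1, hbox⟩ ⟨h2, -⟩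
    have hinj : Function.Injective o := by
      intro a b hab
      obtain ⟨a', rfl⟩ := σ.surjective a
      obtain ⟨b', rfl⟩ := σ.surjective b
      rw [h1.injective (show (o ∘ σ) a' = (o ∘ σ) b' from hab)]
    have hr : Set.range (o ∘ σ) = Set.range (o ∘ τ) := by
      rw [σ.surjective.range_comp, τ.surjective.range_comp]
    have heq : o ∘ σ = o ∘ τ := (h1.range_inj h2).mp hr
    exact hστ (Equiv.ext fun j => hinj (congrFun heq j))
  have hcover : B \ T ⊆ ⋃ σ : Equiv.Perm ι, S σ := by
    rintro o ⟨hbox, hT⟩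
    have hinj : Function.Injective o := by
      intro a b hab
      by_contra h
      exact hT ⟨a, b, h, hab⟩
    set e : Fin c ≃o ι := monoEquivOfFin ι rfl with hedef
    set f : Fin c → ℝ := o ∘ e with hfdef
    have hfinj : Function.Injective (f ∘ Tuple.sort f) :=
      (hinj.comp e.injective).comp (Tuple.sort f).injective
    have hsm : StrictMono (f ∘ Tuple.sort f) :=
      (Tuple.monotone_sort f).strictMono_of_injective hfinj
    refine Set.mem_iUnion.mpr ⟨(e.toEquiv.symm.trans (Tuple.sort f)).trans e.toEquiv, ?_, ?_⟩
    · show StrictMono (o ∘ fun j => e ((Tuple.sort f) (e.symm j)))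
      have : (o ∘ fun j => e ((Tuple.sort f) (e.symm j)))
          = (f ∘ Tuple.sort f) ∘ (e.symm : ι → Fin c) := rfl
      rw [this]
      exact hsm.comp e.symm.strictMono
    · exact (hBmem o).mp hbox
  have hB : volume B = ENNReal.ofReal ((u - l) ^ c) := by
    rw [hBdef, volume_pi_pi]
    simp [Real.volume_Ico, Finset.prod_const, ← ENNReal.ofReal_pow (sub_nonneg.2 hlu)]
    rfl
  have hunion_sub : (⋃ σ : Equiv.Perm ι, S σ) ⊆ B := by
    refine Set.iUnion_subset fun σ o ho => (hBmem o).mpr ho.2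
  have hsum : volume (⋃ σ : Equiv.Perm ι, S σ) = (Nat.factorial c : ℝ≥0∞) * volume (S 1) := by
    rw [measure_iUnion hdisj hSmeas, tsum_fintype]
    simp only [hSvol]
    rw [Finset.sum_const, Finset.card_univ, Fintype.card_perm, nsmul_eq_mul]
  have hBU : volume (⋃ σ : Equiv.Perm ι, S σ) = volume B := by
    refine le_antisymm (measure_mono hunion_sub) ?_
    calc volume B = volume (B \ T) := (measure_diff_null ties_null).symm
    _ ≤ volume (⋃ σ : Equiv.Perm ι, S σ) := measure_mono hcover
  have hfact : (Nat.factorial c : ℝ≥0∞) * volume (S 1) = ENNReal.ofReal ((u - l) ^ c) := by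
    rw [← hsum, hBU, hB]
  have hS1 : volume (S 1) = ENNReal.ofReal ((u - l) ^ c) / (Nat.factorial c : ℝ≥0∞) :=
    (ENNReal.eq_div_iff (by exact_mod_cast (Nat.factorial_pos c).ne')
      (ENNReal.natCast_ne_top _)).mpr hfact
  have hMS : volume {o : ι → ℝ | Monotone o ∧ ∀ j, l ≤ o j ∧ o j < u} = volume (S 1) := by
    refine le_antisymm ?_ ?_
    · have hsub : {o : ι → ℝ | Monotone o ∧ ∀ j, l ≤ o j ∧ o j < u} ⊆ S 1 ∪ T := by
        rintro o ⟨hmono, hbox⟩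
        by_cases hSM : StrictMono o
        · exact Or.inl ⟨by simpa using hSM, hbox⟩
        · right
          simp only [StrictMono, not_forall] at hSM
          obtain ⟨j, k, hjk, hnl⟩ := hSM
          exact ⟨j, k, hjk.ne, le_antisymm (hmono hjk.le) (not_lt.mp hnl)⟩
      calc volume {o : ι → ℝ | Monotone o ∧ ∀ j, l ≤ o j ∧ o j < u}
          ≤ volume (S 1 ∪ T) := measure_mono hsub
        _ ≤ volume (S 1) + volume T := measure_union_le _ _
        _ = volume (S 1) := by rw [ties_null, add_zero]
    · refine measure_mono fun o ho => ?_
      exact ⟨(show StrictMono o by simpa using ho.1).monotone, ho.2⟩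
  rw [hMS, hS1, ENNReal.ofReal_div_of_pos (by positivity), ENNReal.ofReal_natCast]

/-- The scale factor `γ(s) = ∏_{i ∈ I} c_i(s)!`, where `c_i(s)` is the number of occurrences
of the interval `i` in the nondecreasing sequence `s`. -/
noncomputable def gammaFun (n m : ℕ) (s : Fin m → Fin (n + 1)) : ℝ :=
  ∏ i : Fin (n + 1), (Nat.factorial ((Finset.univ.filter (fun j => s j = i)).card) : ℝ)

/-- For every nondecreasing index sequence `s = (i_1,…,i_m) ∈ S↗`, the `m`-dimensional
Lebesgue measure of the cell
`g_O(s) = {o ∈ O↗ : x_{i_j} ≤ o_j < x_{i_j + 1} for all j}`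
equals `(∏_{j=1}^m (x_{i_j + 1} − x_{i_j})) / γ(s)`. -/
theorem volume_cell (a b : ℝ) (hab : a < b) (n m : ℕ) (hn : 1 ≤ n) (hm : 1 ≤ m)
    (x : ℕ → ℝ) (hx0 : x 0 = a) (hxtop : x (n + 1) = b)
    (hxmono : ∀ i ≤ n, x i ≤ x (i + 1))
    (s : Fin m → Fin (n + 1)) (hs : Monotone s) :
    volume {o : Fin m → ℝ | (Monotone o ∧ ∀ i, a ≤ o i ∧ o i ≤ b) ∧
        ∀ j, x (s j : ℕ) ≤ o j ∧ o j < x ((s j : ℕ) + 1)}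
      = ENNReal.ofReal ((∏ j, (x ((s j : ℕ) + 1) - x (s j : ℕ))) / gammaFun n m s) := by

  -- chain monotonicity
  have hchain : ∀ p q : ℕ, p ≤ q → q ≤ n + 1 → x p ≤ x q := by
    intro p q hpq hq
    induction q with
    | zero => exact le_of_eq (by rw [Nat.le_zero.mp hpq])
    | succ k ih =>
      rcases Nat.lt_or_ge p (k + 1) with h | h
      · exact (ih (Nat.lt_succ_iff.mp h) (by omega)).trans (hxmono k (by omega))
      · have : p = k + 1 := le_antisymm hpq h
        simp [this]
  set A : Set (Fin m → ℝ) := {o | (Monotone o ∧ ∀ i, a ≤ o i ∧ o i ≤ b) ∧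
      ∀ j, x (s j : ℕ) ≤ o j ∧ o j < x ((s j : ℕ) + 1)} with hAdef
  have hAmeas : MeasurableSet A := by
    have : A = {o : Fin m → ℝ | Monotone o} ∩
        ((⋂ i, (fun o : Fin m → ℝ => o i) ⁻¹' Set.Icc a b) ∩
         (⋂ j, (fun o : Fin m → ℝ => o j) ⁻¹' Set.Ico (x (s j : ℕ)) (x ((s j : ℕ) + 1)))) := by
      ext o
      simp [hAdef, Set.mem_iInter, Set.mem_Icc, Set.mem_Ico, and_assoc]
    rw [this]
    refine measurableSet_monotone.inter (MeasurableSet.inter ?_ ?_)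
    · exact MeasurableSet.iInter fun i => (measurable_pi_apply i) measurableSet_Icc
    · exact MeasurableSet.iInter fun j => (measurable_pi_apply j) measurableSet_Ico
  -- the fiber types
  set κ : Fin (n + 1) → Type := fun i => {j : Fin m // s j = i} with hκdef
  set Φ : (∀ i, κ i → ℝ) → (Fin m → ℝ) := fun g j => g (s j) ⟨j, rfl⟩ with hΦdef
  have hkey : ∀ (g : ∀ i, κ i → ℝ) (j : Fin m) (i : Fin (n+1)) (hj : s j = i),
      g i ⟨j, hj⟩ = Φ g j := by
    rintro g j i rfl; rfl
  -- measure preserving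
  have huncurry : MeasurePreserving
      (Sigma.uncurry : (∀ i, κ i → ℝ) → ((Σ i, κ i) → ℝ)) volume volume := by
    constructor
    · exact measurable_pi_lambda _ fun p => (measurable_pi_apply p.2).comp (measurable_pi_apply p.1)
    · refine (Measure.pi_eq fun E hE => ?_).symm
      have hpre : (Sigma.uncurry : (∀ i, κ i → ℝ) → ((Σ i, κ i) → ℝ)) ⁻¹'
          (Set.pi Set.univ E) = Set.pi Set.univ (fun i => Set.pi Set.univ fun j => E ⟨i, j⟩) := by
        ext g
        simp only [Set.mem_preimage, Set.mem_pi, Set.mem_univ, forall_true_left]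
        exact ⟨fun h i p => h ⟨i, p⟩, fun h p => h p.1 p.2⟩
      rw [Measure.map_apply (measurable_pi_lambda _ fun p =>
          (measurable_pi_apply p.2).comp (measurable_pi_apply p.1))
          (MeasurableSet.univ_pi hE), hpre, volume_pi_pi]
      calc ∏ i : Fin (n+1), volume (Set.pi Set.univ fun j => E ⟨i, j⟩)
          = ∏ i : Fin (n+1), ∏ j : κ i, volume (E ⟨i, j⟩) :=
            Finset.prod_congr rfl fun i _ => volume_pi_pi _
        _ = ∏ p : Sigma κ, volume (E p) := by
            rw [← Finset.univ_sigma_univ, Finset.prod_sigma]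
  have hΦmp : MeasurePreserving Φ volume volume := by
    have h1 := volume_measurePreserving_piCongrLeft (fun _ : Fin m => ℝ) (Equiv.sigmaFiberEquiv s)
    have h2 := h1.comp huncurry
    have heq : (⇑(MeasurableEquiv.piCongrLeft (fun _ : Fin m => ℝ) (Equiv.sigmaFiberEquiv s)))
        ∘ (Sigma.uncurry : (∀ i, κ i → ℝ) → ((Σ i, κ i) → ℝ)) = Φ := by
      funext g
      funext j
      rw [Function.comp_apply, MeasurableEquiv.coe_piCongrLeft,
        show j = (Equiv.sigmaFiberEquiv s) ⟨s j, ⟨j, rfl⟩⟩ from rfl,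
        Equiv.piCongrLeft_apply_apply]
      rfl
    rwa [heq] at h2
  -- blocks
  set Blk : ∀ i : Fin (n + 1), Set (κ i → ℝ) := fun i =>
    {h | Monotone h ∧ ∀ j, x (i : ℕ) ≤ h j ∧ h j < x ((i : ℕ) + 1)} with hBlkdef
  have hpreA : Φ ⁻¹' A = Set.pi Set.univ Blk := by
    ext g
    simp only [Set.mem_preimage, hAdef, Set.mem_setOf_eq, Set.mem_pi, Set.mem_univ,
      forall_true_left, hBlkdef]
    constructor
    · rintro ⟨⟨hmono, hbnd⟩, hico⟩ i
      constructor
      · rintro ⟨j, hj⟩ ⟨k, hk⟩ hjk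
        rw [hkey g j i hj, hkey g k i hk]
        exact hmono (by exact_mod_cast hjk)
      · rintro ⟨j, hj⟩
        subst hj
        rw [hkey g j _ rfl]
        exact hico j
    · intro h
      have hico : ∀ j : Fin m, x (s j : ℕ) ≤ Φ g j ∧ Φ g j < x ((s j : ℕ) + 1) := by
        intro j
        have := (h (s j)).2 ⟨j, rfl⟩
        rwa [hkey g j (s j) rfl] at this
      refine ⟨⟨?_, ?_⟩, hico⟩
      · intro j k hjk
        rcases eq_or_lt_of_le (hs hjk) with heq | hlt
        · have h1 : Φ g j = g (s j) ⟨j, rfl⟩ := rfl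
          have h2 : Φ g k = g (s j) ⟨k, heq.symm⟩ := (hkey g k (s j) heq.symm).symm
          rw [h1, h2]
          exact (h (s j)).1 (show (⟨j, rfl⟩ : κ (s j)) ≤ ⟨k, heq.symm⟩ from hjk)
        · have hv : ((s j : ℕ) + 1) ≤ (s k : ℕ) := hlt
          calc Φ g j ≤ x ((s j : ℕ) + 1) := (hico j).2.le
            _ ≤ x (s k : ℕ) := hchain _ _ hv (by omega)
            _ ≤ Φ g k := (hico k).1
      · intro j
        constructor
        · calc a = x 0 := hx0.symm
            _ ≤ x (s j : ℕ) := hchain 0 _ (Nat.zero_le _) (by omega)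
            _ ≤ Φ g j := (hico j).1
        · calc Φ g j ≤ x ((s j : ℕ) + 1) := (hico j).2.le
            _ ≤ x (n + 1) := hchain _ _ (by omega) le_rfl
            _ = b := hxtop
  have hvol : volume A = ∏ i : Fin (n + 1), volume (Blk i) := by
    rw [← hΦmp.measure_preimage hAmeas.nullMeasurableSet, hpreA, volume_pi_pi]
  have hcard : ∀ i : Fin (n + 1), Fintype.card (κ i)
      = (Finset.univ.filter (fun j => s j = i)).card := fun i => Fintype.card_subtype _
  have hblk : ∀ i : Fin (n + 1), volume (Blk i) = ENNReal.ofReal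
      ((x ((i : ℕ) + 1) - x (i : ℕ)) ^ ((Finset.univ.filter (fun j => s j = i)).card)
        / (Nat.factorial ((Finset.univ.filter (fun j => s j = i)).card))) := by
    intro i
    rw [hBlkdef]
    have := volume_block (ι := κ i) (hxmono (i : ℕ) (by omega))
    rw [hcard i] at this
    exact this
  have hnn : ∀ i : Fin (n + 1), (0:ℝ) ≤
      (x ((i : ℕ) + 1) - x (i : ℕ)) ^ ((Finset.univ.filter (fun j => s j = i)).card)
        / (Nat.factorial ((Finset.univ.filter (fun j => s j = i)).card)) := by
    intro i
    have h0 : (0:ℝ) ≤ x ((i : ℕ) + 1) - x (i : ℕ) := sub_nonneg.2 (hxmono _ (by omega))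
    positivity
  rw [hvol]
  calc (∏ i : Fin (n + 1), volume (Blk i))
      = ENNReal.ofReal (∏ i : Fin (n + 1),
          ((x ((i : ℕ) + 1) - x (i : ℕ)) ^ ((Finset.univ.filter (fun j => s j = i)).card)
            / (Nat.factorial ((Finset.univ.filter (fun j => s j = i)).card)))) := by
        rw [ENNReal.ofReal_prod_of_nonneg (fun i _ => hnn i)]
        exact Finset.prod_congr rfl fun i _ => hblk i
    _ = ENNReal.ofReal ((∏ j, (x ((s j : ℕ) + 1) - x (s j : ℕ))) / gammaFun n m s) := by
        congr 1
        rw [Finset.prod_div_distrib]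
        congr 1
        · rw [← Finset.prod_fiberwise_of_maps_to (fun j _ => Finset.mem_univ (s j))
            (fun j => x ((s j : ℕ) + 1) - x (s j : ℕ))]
          refine Finset.prod_congr rfl fun i _ => ?_
          have hconst : ∏ j ∈ Finset.univ.filter (fun j => s j = i),
              (x ((s j : ℕ) + 1) - x (s j : ℕ))
              = ∏ j ∈ Finset.univ.filter (fun j => s j = i), (x ((i:ℕ) + 1) - x (i:ℕ)) :=
            Finset.prod_congr rfl fun j hj => by rw [(Finset.mem_filter.mp hj).2]
          rw [hconst, Finset.prod_const]
end

section
/- Fix ε > 0 and a dataset X of n points in [a,b] with sorted values x_1 ≤ ... ≤ x_n. Then the continuous and discrete normalizing constants agree: ∫_{O↗} exp((ε/4)·u_Q(X,o)) do = ∑_{s = (i_1,...,i_m) ∈ S↗} exp((ε/4)·u_{Q'}(X,s)) · (∏_{j=1}^m (x_{i_j + 1} − x_{i_j})) / γ(s), where the integral is with respect to m-dimensional Lebesgue measure. -/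
open scoped Classical
open Finset MeasureTheory
open scoped ENNReal

/-- Extension of the index sequence `s = (i_1, …, i_m)` by `i_0 = 0` and `i_{m+1} = n`. -/
noncomputable def iext (n m : ℕ) (s : Fin m → Fin (n + 1)) (j : ℕ) : ℕ :=
  if h : 1 ≤ j ∧ j ≤ m then (s ⟨j - 1, by omega⟩ : ℕ) else if j = 0 then 0 else n

/-- The discrete utility `u_{Q'}(X, s) = -∑_{j=1}^{m+1} |(i_j - i_{j-1}) - (q_j - q_{j-1})·n|`. -/
noncomputable def uQ' (n m : ℕ) (q : ℕ → ℝ) (s : Fin m → Fin (n + 1)) : ℝ :=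
  -∑ j ∈ Finset.range (m + 1),
    |((iext n m s (j + 1) : ℝ) - (iext n m s j : ℝ)) - (q (j + 1) - q j) * n|

/-- The output space `O↗ = {(o_1,…,o_m) : a ≤ o_1 ≤ ⋯ ≤ o_m ≤ b}`. -/
def Oup (a b : ℝ) (m : ℕ) : Set (Fin m → ℝ) :=
  {o | Monotone o ∧ ∀ i, a ≤ o i ∧ o i ≤ b}

lemma hyperplane_null_s6 {m : ℕ} (j : Fin m) (c : ℝ) :
    volume {o : Fin m → ℝ | o j = c} = 0 := by
  rw [MeasureTheory.volume_pi]
  exact MeasureTheory.Measure.pi_hyperplane (μ := fun _ : Fin m => (volume : Measure ℝ)) j c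

lemma diag_null {m : ℕ} {j k : Fin m} (h : j ≠ k) :
    volume {o : Fin m → ℝ | o j = o k} = 0 := by
  have hset : {o : Fin m → ℝ | o j = o k} =
      ↑(LinearMap.ker ((LinearMap.proj j : (Fin m → ℝ) →ₗ[ℝ] ℝ) - LinearMap.proj k)) := by
    ext o
    simp [LinearMap.mem_ker, sub_eq_zero]
  rw [hset]
  refine MeasureTheory.Measure.addHaar_submodule _ _ ?_
  intro htop
  have h1 : Pi.single j (1:ℝ) ∈ LinearMap.ker
      ((LinearMap.proj j : (Fin m → ℝ) →ₗ[ℝ] ℝ) - LinearMap.proj k) := htop ▸ Submodule.mem_top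
  simp [LinearMap.mem_ker, Pi.single_apply, h.symm, sub_eq_zero] at h1

lemma measurableSet_mono {m : ℕ} : MeasurableSet {o : Fin m → ℝ | Monotone o} := by
  have : {o : Fin m → ℝ | Monotone o} =
      ⋂ (j : Fin m) (k : Fin m) (_ : j ≤ k), {o : Fin m → ℝ | o j ≤ o k} := by
    ext o
    simp only [Set.mem_setOf_eq, Set.mem_iInter]
    exact ⟨fun h j k hjk => h hjk, fun h j k hjk => h j k hjk⟩
  rw [this]
  exact MeasurableSet.iInter fun j => MeasurableSet.iInter fun k => MeasurableSet.iInter fun _ =>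
    measurableSet_le (measurable_pi_apply j) (measurable_pi_apply k)

/-- The open cell associated to an index sequence `s`. -/
def cell {n : ℕ} (x : ℕ → ℝ) (m : ℕ) (s : Fin m → Fin (n + 1)) : Set (Fin m → ℝ) :=
  {o | Monotone o ∧ ∀ j, o j ∈ Set.Ioo (x (s j)) (x ((s j : ℕ) + 1))}

lemma measurableSet_cell {n : ℕ} (x : ℕ → ℝ) (m : ℕ) (s : Fin m → Fin (n + 1)) :
    MeasurableSet (cell x m s) := by
  have : cell x m s = {o : Fin m → ℝ | Monotone o} ∩
      ⋂ j, (fun o : Fin m → ℝ => o j) ⁻¹' Set.Ioo (x (s j)) (x ((s j : ℕ) + 1)) := by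
    ext o
    simp [cell, Set.mem_iInter]
  rw [this]
  exact measurableSet_mono.inter <| MeasurableSet.iInter fun j =>
    (measurable_pi_apply j) measurableSet_Ioo

lemma comp_perm_measurePreserving {m : ℕ} (σ : Equiv.Perm (Fin m)) :
    MeasurePreserving (fun o : Fin m → ℝ => o ∘ σ) volume volume := by
  have h := MeasureTheory.volume_measurePreserving_piCongrLeft (fun _ : Fin m => ℝ) σ.symm
  have heq : ⇑(MeasurableEquiv.piCongrLeft (fun _ : Fin m => ℝ) σ.symm)
      = fun o : Fin m → ℝ => o ∘ σ := by
    funext o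
    funext a
    show (MeasurableEquiv.piCongrLeft (fun _ : Fin m => ℝ) σ.symm) o a = o (σ a)
    have key := Equiv.piCongrLeft_apply_apply (fun _ : Fin m => ℝ) σ.symm o (σ a)
    rw [MeasurableEquiv.coe_piCongrLeft]
    simp only [σ.symm_apply_apply] at key
    exact key
  rwa [heq] at h

lemma cell_volume {n : ℕ} (x : ℕ → ℝ) (hx : ∀ i k, i ≤ k → k ≤ n + 1 → x i ≤ x k)
    (m : ℕ) (s : Fin m → Fin (n + 1)) (hs : Monotone s) :
    ((∏ i : Fin (n + 1), Nat.factorial ((Finset.univ.filter (fun j => s j = i)).card) : ℕ) : ℝ≥0∞)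
        * volume (cell x m s)
      = ENNReal.ofReal (∏ j, (x ((s j : ℕ) + 1) - x (s j : ℕ))) := by
  classical
  have hsn : ∀ j : Fin m, (s j : ℕ) ≤ n := fun j => Nat.lt_succ_iff.mp (s j).isLt
  have hnonneg : ∀ j : Fin m, 0 ≤ x ((s j : ℕ) + 1) - x (s j : ℕ) := fun j =>
    sub_nonneg.mpr (hx _ _ (Nat.le_succ _) (by have := hsn j; omega))
  set Δ : Fin m → Set ℝ := fun j => Set.Ioo (x (s j : ℕ)) (x ((s j : ℕ) + 1)) with hΔdef
  set Box : Set (Fin m → ℝ) := Set.pi Set.univ Δ with hBoxdef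
  set Nb : Set (Fin m → ℝ) := ⋃ (j : Fin m) (k : Fin m) (_ : j ≠ k), {o | o j = o k} with hNbdef
  have hNb : volume Nb = 0 := by
    refine measure_iUnion_null fun j => measure_iUnion_null fun k => measure_iUnion_null fun h =>
      diag_null h
  have hNbm : MeasurableSet Nb := by
    refine MeasurableSet.iUnion fun j => MeasurableSet.iUnion fun k => MeasurableSet.iUnion
      fun h => ?_
    exact measurableSet_eq_fun (measurable_pi_apply j) (measurable_pi_apply k)
  have hinj_of_not : ∀ o : Fin m → ℝ, o ∉ Nb → Function.Injective o := by
    intro o ho j k hjk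
    by_contra hne
    exact ho (Set.mem_iUnion.2 ⟨j, Set.mem_iUnion.2 ⟨k, Set.mem_iUnion.2 ⟨hne, hjk⟩⟩⟩)
  have hCell : MeasurableSet (cell x m s) := measurableSet_cell x m s
  set G : Finset (Equiv.Perm (Fin m)) := Finset.univ.filter (fun σ => s ∘ σ = s) with hGdef
  set A : Equiv.Perm (Fin m) → Set (Fin m → ℝ) :=
    fun σ => (fun o : Fin m → ℝ => o ∘ σ) ⁻¹' (cell x m s) with hAdef
  have hAm : ∀ σ, MeasurableSet (A σ) := fun σ =>
    (comp_perm_measurePreserving σ).measurable hCell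
  have hAvol : ∀ σ, volume (A σ) = volume (cell x m s) := fun σ =>
    (comp_perm_measurePreserving σ).measure_preimage hCell.nullMeasurableSet
  have hABox : ∀ σ ∈ G, A σ ⊆ Box := by
    intro σ hσ o ho
    have hsσ : s ∘ σ = s := (Finset.mem_filter.1 hσ).2
    intro a _
    have h1 : o (σ (σ.symm a)) ∈ Set.Ioo (x (s (σ.symm a) : ℕ)) (x ((s (σ.symm a) : ℕ) + 1)) :=
      ho.2 (σ.symm a)
    have h2 : s (σ.symm a) = s a := by
      have := congrFun hsσ (σ.symm a)
      simpa [σ.apply_symm_apply] using this.symm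
    simpa [Δ, σ.apply_symm_apply, h2] using h1
  have hcover : Box \ Nb ⊆ ⋃ σ ∈ G, A σ := by
    rintro o ⟨hoB, hoN⟩
    have hinj : Function.Injective o := hinj_of_not o hoN
    set σ := Tuple.sort o with hσdef
    have hmono : Monotone (o ∘ σ) := Tuple.monotone_sort o
    have hsσmono : Monotone (s ∘ σ) := by
      intro j k hjk
      by_contra hlt
      push_neg at hlt
      have hxlt : x ((s (σ k) : ℕ) + 1) ≤ x (s (σ j) : ℕ) :=
        hx _ _ (by exact_mod_cast hlt) (by have := hsn (σ j); omega)
      have h1 : o (σ k) < x ((s (σ k) : ℕ) + 1) := (hoB (σ k) (Set.mem_univ _)).2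
      have h2 : x (s (σ j) : ℕ) < o (σ j) := (hoB (σ j) (Set.mem_univ _)).1
      have h3 : o (σ k) < o (σ j) := lt_of_lt_of_le h1 (hxlt.trans h2.le)
      exact absurd (hmono hjk) (not_le.2 h3)
    have hsσ : s ∘ σ = s := by
      have h1 : Monotone (s ∘ (1 : Equiv.Perm (Fin m))) := by simpa using hs
      have := Tuple.unique_monotone hsσmono h1
      simpa using this
    have hσG : σ ∈ G := Finset.mem_filter.2 ⟨Finset.mem_univ _, hsσ⟩
    refine Set.mem_biUnion hσG ?_
    refine ⟨hmono, fun j => ?_⟩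
    have h4 := hoB (σ j) (Set.mem_univ _)
    have h2 : s (σ j) = s j := congrFun hsσ j
    show o (σ j) ∈ Set.Ioo (x (s j : ℕ)) (x ((s j : ℕ) + 1))
    rwa [← h2]
  have hdisj : Set.Pairwise ↑G (Function.onFun Disjoint fun σ => A σ \ Nb) := by
    intro σ hσ τ hτ hne
    refine Set.disjoint_left.2 fun o hoσ hoτ => hne ?_
    have hinj : Function.Injective o := hinj_of_not o hoσ.2
    have h1 : Monotone (o ∘ σ) := hoσ.1.1
    have h2 : Monotone (o ∘ τ) := hoτ.1.1
    have := Tuple.unique_monotone h1 h2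
    exact Equiv.ext fun j => hinj (congrFun this j)
  have hBoxVol : volume Box = ENNReal.ofReal (∏ j, (x ((s j : ℕ) + 1) - x (s j : ℕ))) := by
    rw [hBoxdef, volume_pi_pi]
    rw [ENNReal.ofReal_prod_of_nonneg (fun j _ => hnonneg j)]
    exact Finset.prod_congr rfl fun j _ => Real.volume_Ioo
  have hpart : Box \ Nb = ⋃ σ ∈ G, (A σ \ Nb) := by
    apply Set.Subset.antisymm
    · intro o ho
      obtain ⟨σ, hσ, hA⟩ := Set.mem_iUnion₂.1 (hcover ho)
      exact Set.mem_iUnion₂.2 ⟨σ, hσ, hA, ho.2⟩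
    · rintro o ho
      obtain ⟨σ, hσ, hA, hN⟩ := Set.mem_iUnion₂.1 ho
      exact ⟨hABox σ hσ hA, hN⟩
  have hsum : volume Box = ∑ σ ∈ G, volume (A σ \ Nb) := by
    rw [← measure_diff_null hNb, hpart]
    exact measure_biUnion_finset hdisj fun σ _ => (hAm σ).diff hNbm
  have hAvol' : ∀ σ, volume (A σ \ Nb) = volume (cell x m s) := fun σ => by
    rw [measure_diff_null hNb, hAvol]
  have hGcard : G.card
      = ∏ i : Fin (n + 1), Nat.factorial ((Finset.univ.filter (fun j => s j = i)).card) := by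
    have h1 : G.card = Fintype.card {g : Equiv.Perm (Fin m) // s ∘ g = s} := by
      rw [Fintype.card_subtype]
    rw [h1, DomMulAct.stabilizer_card s]
    exact Finset.prod_congr rfl fun i _ => by rw [Fintype.card_subtype]
  calc ((∏ i : Fin (n + 1), Nat.factorial ((Finset.univ.filter (fun j => s j = i)).card) : ℕ)
        : ℝ≥0∞) * volume (cell x m s)
      = (G.card : ℝ≥0∞) * volume (cell x m s) := by rw [hGcard]
    _ = ∑ σ ∈ G, volume (A σ \ Nb) := by
        rw [Finset.sum_congr rfl fun σ _ => hAvol' σ, Finset.sum_const, nsmul_eq_mul]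
    _ = volume Box := hsum.symm
    _ = _ := hBoxVol

lemma oext_zero (a b : ℝ) (m : ℕ) (o : Fin m → ℝ) : oext a b m o 0 = a := by simp [oext]

lemma oext_of (a b : ℝ) (m : ℕ) (o : Fin m → ℝ) (j : ℕ) (h1 : 1 ≤ j) (h2 : j ≤ m) :
    oext a b m o j = o ⟨j - 1, by omega⟩ := by rw [oext, dif_pos ⟨h1, h2⟩]

lemma oext_top (a b : ℝ) (m : ℕ) (o : Fin m → ℝ) : oext a b m o (m + 1) = b + 1 := by
  rw [oext, dif_neg (by omega)]
  simp

lemma iext_zero (n m : ℕ) (s : Fin m → Fin (n + 1)) : iext n m s 0 = 0 := by simp [iext]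

lemma iext_of (n m : ℕ) (s : Fin m → Fin (n + 1)) (j : ℕ) (h1 : 1 ≤ j) (h2 : j ≤ m) :
    iext n m s j = (s ⟨j - 1, by omega⟩ : ℕ) := by rw [iext, dif_pos ⟨h1, h2⟩]

lemma iext_top (n m : ℕ) (s : Fin m → Fin (n + 1)) : iext n m s (m + 1) = n := by
  rw [iext, dif_neg (by omega)]
  simp

lemma cnt_eq {n : ℕ} {x : ℕ → ℝ} {X : Multiset ℝ}
    (hX : X = (Multiset.range n).map (fun i => x (i + 1)))
    (u v : ℝ) (p r : ℕ) (hrn : r ≤ n)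
    (hu : ∀ k, 1 ≤ k → k ≤ n → (u ≤ x k ↔ p + 1 ≤ k))
    (hv : ∀ k, 1 ≤ k → k ≤ n → (x k < v ↔ k ≤ r)) :
    cnt X u v = r - p := by
  classical
  subst hX
  rw [cnt, ← Multiset.countP_eq_card_filter, Multiset.countP_map,
    ← Finset.range_val]
  have h1 : Multiset.card (Multiset.filter (fun a => u ≤ x (a + 1) ∧ x (a + 1) < v)
        (Finset.range n).val)
      = ((Finset.range n).filter (fun a => u ≤ x (a + 1) ∧ x (a + 1) < v)).card := by
    rw [Finset.card_def, Finset.filter_val]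
  rw [h1]
  have h2 : (Finset.range n).filter (fun a => u ≤ x (a + 1) ∧ x (a + 1) < v)
      = Finset.Ico p r := by
    ext k
    simp only [Finset.mem_filter, Finset.mem_range, Finset.mem_Ico]
    constructor
    · rintro ⟨hkn, ha, hb⟩
      have h3 := (hu (k + 1) (by omega) (by omega)).1 ha
      have h4 := (hv (k + 1) (by omega) (by omega)).1 hb
      omega
    · rintro ⟨h3, h4⟩
      have hkn : k < n := by omega
      exact ⟨hkn, (hu (k + 1) (by omega) (by omega)).2 (by omega),
        (hv (k + 1) (by omega) (by omega)).2 (by omega)⟩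
  rw [h2, Nat.card_Ico]

/-- The continuous and discrete normalizing constants agree:
`∫_{O↗} exp((ε/4)·u_Q(X,o)) do
  = ∑_{s ∈ S↗} exp((ε/4)·u_{Q'}(X,s)) · (∏_{j=1}^m (x_{i_j+1} − x_{i_j})) / γ(s)`. -/
theorem normalizing_constants_agree (a b : ℝ) (hab : a < b) (n m : ℕ) (hn : 1 ≤ n) (hm : 1 ≤ m)
    (q : ℕ → ℝ) (hq0 : q 0 = 0) (hqtop : q (m + 1) = 1)
    (hqmono : ∀ j ≤ m, q j < q (j + 1))
    (ε : ℝ) (hε : 0 < ε)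
    (x : ℕ → ℝ) (hx0 : x 0 = a) (hxtop : x (n + 1) = b)
    (hxmono : ∀ i ≤ n, x i ≤ x (i + 1))
    (X : Multiset ℝ) (hX : X = (Multiset.range n).map (fun i => x (i + 1))) :
    (∫ o in Oup a b m, Real.exp ((ε / 4) * uQ a b m n q X o))
      = ∑ s ∈ Finset.univ.filter (fun s : Fin m → Fin (n + 1) => Monotone s),
          Real.exp ((ε / 4) * uQ' n m q s) *
            (∏ j, (x ((s j : ℕ) + 1) - x (s j : ℕ))) / gammaFun n m s := by
  classical
  -- global monotonicity of x on {0, …, n+1}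
  have hxm : ∀ i k : ℕ, i ≤ k → k ≤ n + 1 → x i ≤ x k := by
    intro i k hik hkn
    induction k with
    | zero =>
      have hi0 : i = 0 := by omega
      simp [hi0]
    | succ k ih =>
      rcases Nat.lt_or_ge i (k + 1) with h | h
      · exact (ih (by omega) (by omega)).trans (hxmono k (by omega))
      · have hi : i = k + 1 := by omega
        simp [hi]
  set S : Finset (Fin m → Fin (n + 1)) :=
    Finset.univ.filter (fun s : Fin m → Fin (n + 1) => Monotone s) with hSdef
  -- interval characterizations
  have hvIoo : ∀ (r : Fin (n + 1)) (v : ℝ), v ∈ Set.Ioo (x (r : ℕ)) (x ((r : ℕ) + 1)) →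
      ∀ k, 1 ≤ k → k ≤ n → (x k < v ↔ k ≤ (r : ℕ)) := by
    intro r v hvm k hk1 hkn
    have hr := r.isLt
    constructor
    · intro h
      by_contra hc
      push_neg at hc
      have hle : x ((r : ℕ) + 1) ≤ x k := hxm _ _ (by omega) (by omega)
      have := hvm.2
      linarith
    · intro h
      have hle : x k ≤ x (r : ℕ) := hxm _ _ h (by omega)
      have := hvm.1
      linarith
  have huIoo : ∀ (p : Fin (n + 1)) (u : ℝ), u ∈ Set.Ioo (x (p : ℕ)) (x ((p : ℕ) + 1)) →
      ∀ k, 1 ≤ k → k ≤ n → (u ≤ x k ↔ (p : ℕ) + 1 ≤ k) := by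
    intro p u hum k hk1 hkn
    have hp := p.isLt
    constructor
    · intro h
      by_contra hc
      push_neg at hc
      have hle : x k ≤ x (p : ℕ) := hxm _ _ (by omega) (by omega)
      have := hum.1
      linarith
    · intro h
      have hle : x ((p : ℕ) + 1) ≤ x k := hxm _ _ h (by omega)
      have := hum.2
      linarith
  -- the utility is constant on each cell
  have key : ∀ s ∈ S, ∀ o ∈ cell x m s, uQ a b m n q X o = uQ' n m q s := by
    intro s hsS o hocell
    obtain ⟨hmo, hIoo⟩ := hocell
    have hsmono : Monotone s := (Finset.mem_filter.1 hsS).2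
    unfold uQ uQ'
    congr 1
    apply Finset.sum_congr rfl
    intro j hj
    have hjm : j ≤ m := Nat.lt_succ_iff.mp (Finset.mem_range.1 hj)
    have hcnt : ((cnt X (oext a b m o j) (oext a b m o (j + 1))) : ℝ)
        = ((iext n m s (j + 1) : ℕ) : ℝ) - ((iext n m s j : ℕ) : ℝ) := by
      by_cases hj0 : j = 0
      · subst hj0
        have h1 : oext a b m o 1 = o ⟨0, by omega⟩ := oext_of a b m o 1 le_rfl hm
        have hc : cnt X a (o ⟨0, by omega⟩) = (s ⟨0, by omega⟩ : ℕ) - 0 := by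
          refine cnt_eq hX a _ 0 _ (by have := (s ⟨0, by omega⟩).isLt; omega) ?_
            (hvIoo (s ⟨0, by omega⟩) _ (hIoo ⟨0, by omega⟩))
          intro k hk1 hkn
          constructor
          · intro _; omega
          · intro _
            rw [← hx0]
            exact hxm 0 k (by omega) (by omega)
        rw [oext_zero, zero_add, h1, hc,
          iext_of n m s 1 le_rfl hm, iext_zero]
        simp
      · by_cases hjm' : j = m
        · have hj1 : 1 ≤ j := by omega
          have h1 : oext a b m o j = o ⟨j - 1, by omega⟩ := oext_of a b m o j hj1 hjm
          have h2 : oext a b m o (j + 1) = b + 1 := by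
            rw [hjm']
            exact oext_top a b m o
          have hi2 : iext n m s (j + 1) = n := by
            rw [hjm']
            exact iext_top n m s
          have hc : cnt X (o ⟨j - 1, by omega⟩) (b + 1)
              = n - (s ⟨j - 1, by omega⟩ : ℕ) := by
            refine cnt_eq hX _ _ _ n le_rfl
              (huIoo (s ⟨j - 1, by omega⟩) _ (hIoo ⟨j - 1, by omega⟩)) ?_
            intro k hk1 hkn
            constructor
            · intro _; omega
            · intro _
              have hxk : x k ≤ b := by
                rw [← hxtop]
                exact hxm k (n + 1) (by omega) le_rfl
              linarith
          have hle : (s ⟨j - 1, by omega⟩ : ℕ) ≤ n := by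
            have := (s ⟨j - 1, by omega⟩).isLt; omega
          rw [h1, h2, hc, hi2, iext_of n m s j hj1 hjm, Nat.cast_sub hle]
        · -- middle case: 1 ≤ j, j + 1 ≤ m
          have hj1 : 1 ≤ j := by omega
          have hjm2 : j + 1 ≤ m := by omega
          have h1 : oext a b m o j = o ⟨j - 1, by omega⟩ := oext_of a b m o j hj1 hjm
          have h2 : oext a b m o (j + 1) = o ⟨j + 1 - 1, by omega⟩ :=
            oext_of a b m o (j + 1) (by omega) hjm2
          have hple : (s ⟨j - 1, by omega⟩ : ℕ) ≤ (s ⟨j + 1 - 1, by omega⟩ : ℕ) := by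
            have : (⟨j - 1, by omega⟩ : Fin m) ≤ ⟨j + 1 - 1, by omega⟩ := by
              rw [Fin.mk_le_mk]; omega
            exact_mod_cast hsmono this
          have hc : cnt X (o ⟨j - 1, by omega⟩) (o ⟨j + 1 - 1, by omega⟩)
              = (s ⟨j + 1 - 1, by omega⟩ : ℕ) - (s ⟨j - 1, by omega⟩ : ℕ) := by
            refine cnt_eq hX _ _ _ _ (by have := (s ⟨j + 1 - 1, by omega⟩).isLt; omega)
              (huIoo (s ⟨j - 1, by omega⟩) _ (hIoo ⟨j - 1, by omega⟩))
              (hvIoo (s ⟨j + 1 - 1, by omega⟩) _ (hIoo ⟨j + 1 - 1, by omega⟩))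
          rw [h1, h2]
          rw [hc]
          rw [iext_of n m s j hj1 hjm]
          rw [iext_of n m s (j + 1) (by omega) hjm2]
          exact Nat.cast_sub hple
    rw [hcnt]
  -- cells are pairwise disjoint
  have hcelldisj : Set.Pairwise ↑S (Function.onFun Disjoint fun s : Fin m → Fin (n + 1) => cell x m s) := by
    intro s hsS t htS hst
    refine Set.disjoint_left.2 fun o hos hot => hst ?_
    funext j
    have h1 := hos.2 j
    have h2 := hot.2 j
    have hsl := (s j).isLt
    have htl := (t j).isLt
    rcases lt_trichotomy ((s j : ℕ)) ((t j : ℕ)) with h | h | h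
    · have hle : x ((s j : ℕ) + 1) ≤ x (t j : ℕ) := hxm _ _ (by omega) (by omega)
      have := h1.2
      have := h2.1
      linarith
    · exact Fin.ext h
    · have hle : x ((t j : ℕ) + 1) ≤ x (s j : ℕ) := hxm _ _ (by omega) (by omega)
      have := h2.2
      have := h1.1
      linarith
  -- the union of cells
  set Uu : Set (Fin m → ℝ) := ⋃ s ∈ S, cell x m s with hUdef
  have hUsub : Uu ⊆ Oup a b m := by
    intro o ho
    obtain ⟨s, hsS, hmo, hIoo⟩ := Set.mem_iUnion₂.1 ho
    refine ⟨hmo, fun j => ?_⟩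
    have h := hIoo j
    have hsl := (s j).isLt
    have h1 : a ≤ x ((s j : ℕ)) := by
      rw [← hx0]; exact hxm 0 _ (Nat.zero_le _) (by omega)
    have h2 : x ((s j : ℕ) + 1) ≤ b := by
      rw [← hxtop]; exact hxm _ (n + 1) (by omega) le_rfl
    exact ⟨h1.trans h.1.le, h.2.le.trans h2⟩
  have hNnull : volume (Oup a b m \ Uu) = 0 := by
    have hsub : Oup a b m \ Uu
        ⊆ ⋃ (j : Fin m) (i : Fin (n + 2)), {o : Fin m → ℝ | o j = x i} := by
      rintro o ⟨⟨hmo, hbd⟩, hoU⟩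
      by_contra hno
      apply hoU
      simp only [Set.mem_iUnion, not_exists, Set.mem_setOf_eq] at hno
      have hne : ∀ (j : Fin m) (i : ℕ), i ≤ n + 1 → o j ≠ x i := by
        intro j i hi h
        exact hno j ⟨i, by omega⟩ h
      have hne0 : ∀ j : Fin m, ((Finset.range (n + 1)).filter (fun i => x i < o j)).Nonempty := by
        intro j
        refine ⟨0, Finset.mem_filter.2 ⟨Finset.mem_range.2 (by omega), ?_⟩⟩
        have hle := (hbd j).1
        have hneq : o j ≠ x 0 := hne j 0 (by omega)
        rw [hx0]
        rcases lt_or_eq_of_le hle with h | h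
        · exact h
        · exact absurd (hx0 ▸ h.symm) hneq
      set idx : Fin m → ℕ :=
        fun j => ((Finset.range (n + 1)).filter (fun i => x i < o j)).max' (hne0 j) with hidx
      have hmem : ∀ j, idx j ∈ (Finset.range (n + 1)).filter (fun i => x i < o j) :=
        fun j => Finset.max'_mem _ _
      have hlt : ∀ j, x (idx j) < o j := fun j => (Finset.mem_filter.1 (hmem j)).2
      have hub : ∀ j, idx j ≤ n :=
        fun j => Nat.lt_succ_iff.1 (Finset.mem_range.1 (Finset.mem_filter.1 (hmem j)).1)
      have hgt : ∀ j, o j < x (idx j + 1) := by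
        intro j
        have hge : o j ≤ x (idx j + 1) := by
          by_cases hn' : idx j = n
          · rw [hn', hxtop]
            exact (hbd j).2
          · by_contra hc
            push_neg at hc
            have hmem2 : idx j + 1 ∈ (Finset.range (n + 1)).filter (fun i => x i < o j) :=
              Finset.mem_filter.2 ⟨Finset.mem_range.2 (by have := hub j; omega), hc⟩
            have h5 : idx j + 1 ≤ idx j := Finset.le_max' _ _ hmem2
            omega
        rcases lt_or_eq_of_le hge with h | h
        · exact h
        · exact absurd h (hne j (idx j + 1) (by have := hub j; omega))
      set sf : Fin m → Fin (n + 1) := fun j => ⟨idx j, by have := hub j; omega⟩ with hsf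
      have hsfmono : Monotone sf := by
        intro j k hjk
        show (⟨idx j, _⟩ : Fin (n + 1)) ≤ ⟨idx k, _⟩
        rw [Fin.mk_le_mk]
        apply Finset.le_max'
        refine Finset.mem_filter.2 ⟨Finset.mem_range.2 (by have := hub j; omega), ?_⟩
        exact lt_of_lt_of_le (hlt j) (hmo hjk)
      exact Set.mem_biUnion (Finset.mem_filter.2 ⟨Finset.mem_univ _, hsfmono⟩)
        ⟨hmo, fun j => ⟨hlt j, hgt j⟩⟩
    refine measure_mono_null hsub ?_
    exact measure_iUnion_null fun j => measure_iUnion_null fun i => hyperplane_null_s6 j (x i)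
  have hae : Oup a b m =ᵐ[volume] Uu := by
    rw [MeasureTheory.ae_eq_set]
    exact ⟨hNnull, by rw [Set.diff_eq_empty.2 hUsub]; exact measure_empty⟩
  -- finite volume of cells
  have hvolcell : ∀ s : Fin m → Fin (n + 1), volume (cell x m s) < ⊤ := by
    intro s
    have hsub : cell x m s ⊆ Set.pi Set.univ (fun _ : Fin m => Set.Icc a b) := by
      intro o ho j _
      have h := ho.2 j
      have hsl := (s j).isLt
      have h1 : a ≤ x ((s j : ℕ)) := by
        rw [← hx0]; exact hxm 0 _ (Nat.zero_le _) (by omega)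
      have h2 : x ((s j : ℕ) + 1) ≤ b := by
        rw [← hxtop]; exact hxm _ (n + 1) (by omega) le_rfl
      exact ⟨h1.trans h.1.le, h.2.le.trans h2⟩
    refine lt_of_le_of_lt (measure_mono hsub) ?_
    rw [volume_pi_pi]
    refine ENNReal.prod_lt_top fun i _ => ?_
    rw [Real.volume_Icc]
    exact ENNReal.ofReal_lt_top
  have hint : ∀ s ∈ S,
      IntegrableOn (fun o => Real.exp ((ε / 4) * uQ a b m n q X o)) (cell x m s) volume := by
    intro s hsS
    have hEq : Set.EqOn (fun o => Real.exp ((ε / 4) * uQ a b m n q X o))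
        (fun _ => Real.exp ((ε / 4) * uQ' n m q s)) (cell x m s) := by
      intro o ho
      simp only
      rw [key s hsS o ho]
    rw [integrableOn_congr_fun hEq (measurableSet_cell x m s)]
    exact integrableOn_const (hvolcell s).ne
  rw [setIntegral_congr_set hae, hUdef,
    integral_biUnion_finset S (fun s _ => measurableSet_cell x m s) hcelldisj hint]
  refine Finset.sum_congr rfl fun s hsS => ?_
  have hsmono : Monotone s := (Finset.mem_filter.1 hsS).2
  have hEq : Set.EqOn (fun o => Real.exp ((ε / 4) * uQ a b m n q X o))
      (fun _ => Real.exp ((ε / 4) * uQ' n m q s)) (cell x m s) := by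
    intro o ho
    simp only
    rw [key s hsS o ho]
  rw [setIntegral_congr_fun (measurableSet_cell x m s) hEq, setIntegral_const]
  -- volume computation
  have hγℕpos : 0 < ∏ i : Fin (n + 1),
      Nat.factorial ((Finset.univ.filter (fun j => s j = i)).card) :=
    Finset.prod_pos fun i _ => Nat.factorial_pos _
  have hγcast : gammaFun n m s = ((∏ i : Fin (n + 1),
      Nat.factorial ((Finset.univ.filter (fun j => s j = i)).card) : ℕ) : ℝ) := by
    rw [gammaFun, Nat.cast_prod]
  have hγpos : (0 : ℝ) < gammaFun n m s := by
    rw [hγcast]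
    exact_mod_cast hγℕpos
  have hP : 0 ≤ ∏ j, (x ((s j : ℕ) + 1) - x (s j : ℕ)) := by
    refine Finset.prod_nonneg fun j _ => sub_nonneg.2 ?_
    have hsl := (s j).isLt
    exact hxm _ _ (Nat.le_succ _) (by omega)
  have hvol := cell_volume x hxm m s hsmono
  have h1 := congrArg ENNReal.toReal hvol
  rw [ENNReal.toReal_mul, ENNReal.toReal_ofReal hP, ENNReal.toReal_natCast] at h1
  have htr : (volume (cell x m s)).toReal
      = (∏ j, (x ((s j : ℕ) + 1) - x (s j : ℕ))) / gammaFun n m s := by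
    rw [hγcast, eq_div_iff (by exact_mod_cast hγℕpos.ne')]
    rw [mul_comm]
    exact h1
  rw [measureReal_def, htr, smul_eq_mul]
  field_simp
end

section
/- Define α by the recursion: α(1,i,1) = φ(0,i,1)·τ(i) and α(1,i,k) = 0 for k > 1; for j = 2,...,m, α(j,i,1) = τ(i)·∑_{i' < i} φ(i',i,j)·∑_{k < j} α(j−1,i',k), and for k > 1, α(j,i,k) = τ(i)·φ(i,i,j)·α(j−1,i,k−1)/k. Let S↗(j,i,k) denote the set of nondecreasing sequences (i_1,...,i_j) from I such that i_{j−k+1} = ... = i_j = i and, if j > k, i_{j−k} < i. Then for all j ∈ {1,...,m}, i ∈ I, and k ∈ {1,...,j}: α(j,i,k) = ∑_{s = (i_1,...,i_j) ∈ S↗(j,i,k)} (1/γ(s)) · ∏_{j'=1}^{j} φ(i_{j'−1}, i_{j'}, j')·τ(i_{j'}), with i_0 = 0. That is, α(j,i,k) is the total unnormalized probability mass for prefix sequences of length j that end with exactly k copies of interval i. -/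
open scoped Classical
open Finset

/-- The pairwise score `φ(i,i',j) = exp(−(ε/4)·|(i'−i) − (q_j − q_{j−1})·n|)` for `i ≤ i'`,
and `φ(i,i',j) = 0` for `i > i'`. -/
noncomputable def phi (ε : ℝ) (n : ℕ) (q : ℕ → ℝ) (i i' : Fin (n + 1)) (j : ℕ) : ℝ :=
  if (i : ℕ) ≤ (i' : ℕ) then
    Real.exp (-(ε / 4) * |(((i' : ℕ) : ℝ) - ((i : ℕ) : ℝ)) - (q j - q (j - 1)) * n|)
  else 0

/-- The interval width `τ(i) = x_{i+1} − x_i`. -/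
noncomputable def tau (n : ℕ) (x : ℕ → ℝ) (i : Fin (n + 1)) : ℝ :=
  x ((i : ℕ) + 1) - x (i : ℕ)

/-- The scale factor `γ(s) = ∏_{i ∈ I} c_i(s)!` for a length-`j` sequence `s`. -/
noncomputable def gammaSeq (n j : ℕ) (s : Fin j → Fin (n + 1)) : ℝ :=
  ∏ i : Fin (n + 1), (Nat.factorial ((Finset.univ.filter (fun l => s l = i)).card) : ℝ)

/-- The predecessor `i_{l-1}` of position `l` in the sequence `s`, with `i_0 = 0`. -/
noncomputable def prev (n j : ℕ) (s : Fin j → Fin (n + 1)) (l : Fin j) : Fin (n + 1) :=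
  if (l : ℕ) = 0 then 0 else s ⟨(l : ℕ) - 1, lt_of_le_of_lt (Nat.sub_le _ _) l.isLt⟩

section auxSection
variable {n : ℕ} (ε : ℝ) (q x : ℕ → ℝ)

/-- evaluating `Fin.snoc` at an explicit index below `j`. -/
lemma snoc_mk_lt {j : ℕ} (s : Fin j → Fin (n+1)) (y : Fin (n+1)) (a : ℕ) (h : a < j) :
    (Fin.snoc s y : Fin (j+1) → Fin (n+1)) (⟨a, Nat.lt_succ_of_lt h⟩ : Fin (j+1)) = s ⟨a, h⟩ := by
  have : (⟨a, Nat.lt_succ_of_lt h⟩ : Fin (j+1)) = Fin.castSucc ⟨a, h⟩ := rfl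
  rw [this, Fin.snoc_castSucc]

lemma snoc_val_lt {j : ℕ} (s : Fin j → Fin (n+1)) (y : Fin (n+1)) (l : Fin (j+1))
    (h : (l : ℕ) < j) :
    (Fin.snoc s y : Fin (j+1) → Fin (n+1)) l = s ⟨(l : ℕ), h⟩ := by
  obtain ⟨v, hv⟩ := l
  exact snoc_mk_lt s y v h

lemma cnt_snoc {j : ℕ} (s : Fin j → Fin (n+1)) (y i : Fin (n+1)) :
    (Finset.univ.filter (fun l : Fin (j+1) => (Fin.snoc s y : Fin (j+1) → Fin (n+1)) l = i)).card
      = (Finset.univ.filter (fun l : Fin j => s l = i)).card + (if y = i then 1 else 0) := by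
  rw [Finset.card_filter, Finset.card_filter, Fin.sum_univ_castSucc]
  simp [Fin.snoc_castSucc, Fin.snoc_last]

lemma gamma_snoc {j : ℕ} (s : Fin j → Fin (n+1)) (y : Fin (n+1)) :
    gammaSeq n (j+1) (Fin.snoc s y)
      = gammaSeq n j s * (((Finset.univ.filter (fun l : Fin j => s l = y)).card : ℝ) + 1) := by
  unfold gammaSeq
  rw [← Finset.mul_prod_erase (a := y) (h := Finset.mem_univ y),
      ← Finset.mul_prod_erase (a := y) (h := Finset.mem_univ y)]
  rw [mul_right_comm]
  congr 1
  · rw [cnt_snoc, if_pos rfl, Nat.factorial_succ]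
    push_cast; ring
  · apply Finset.prod_congr rfl
    intro i hi
    rw [cnt_snoc, if_neg (fun h => (Finset.mem_erase.mp hi).1 h.symm), Nat.add_zero]

lemma prev_snoc_castSucc {j : ℕ} (s : Fin j → Fin (n+1)) (y : Fin (n+1)) (l : Fin j) :
    prev n (j+1) (Fin.snoc s y) (Fin.castSucc l) = prev n j s l := by
  unfold prev
  rcases Nat.eq_zero_or_pos (l : ℕ) with h | h
  · simp [h]
  · rw [if_neg (by simp; omega), if_neg (by omega)]
    simp only [Fin.coe_castSucc]
    exact snoc_mk_lt s y ((l : ℕ) - 1) (by omega)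

lemma prev_snoc_last {j : ℕ} (hj : 0 < j) (s : Fin j → Fin (n+1)) (y : Fin (n+1)) :
    prev n (j+1) (Fin.snoc s y) (Fin.last j) = s ⟨j - 1, by omega⟩ := by
  unfold prev
  rw [if_neg (by simp; omega)]
  simp only [Fin.val_last]
  exact snoc_mk_lt s y (j - 1) (by omega)

lemma prod_snoc {j : ℕ} (hj : 0 < j) (s : Fin j → Fin (n+1)) (y : Fin (n+1)) :
    (∏ l : Fin (j+1), phi ε n q (prev n (j+1) (Fin.snoc s y) l)
        ((Fin.snoc s y : Fin (j+1) → Fin (n+1)) l) ((l : ℕ) + 1)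
        * tau n x ((Fin.snoc s y : Fin (j+1) → Fin (n+1)) l))
      = (∏ l : Fin j, phi ε n q (prev n j s l) (s l) ((l : ℕ) + 1) * tau n x (s l))
        * (phi ε n q (s ⟨j - 1, by omega⟩) y (j+1) * tau n x y) := by
  rw [Fin.prod_univ_castSucc]
  congr 1
  · apply Finset.prod_congr rfl
    intro l _
    rw [prev_snoc_castSucc, Fin.snoc_castSucc, Fin.coe_castSucc]
  · rw [prev_snoc_last hj, Fin.snoc_last, Fin.val_last]

lemma monotone_snoc {j : ℕ} {s : Fin j → Fin (n+1)} {y : Fin (n+1)}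
    (hs : Monotone s) (hy : ∀ l, s l ≤ y) : Monotone (Fin.snoc s y : Fin (j+1) → Fin (n+1)) := by
  intro a b hab
  induction b using Fin.lastCases with
  | last =>
    rw [Fin.snoc_last]
    induction a using Fin.lastCases with
    | last => rw [Fin.snoc_last]
    | cast a' => rw [Fin.snoc_castSucc]; exact hy a'
  | cast b' =>
    induction a using Fin.lastCases with
    | last => exact absurd (lt_of_le_of_lt hab (Fin.castSucc_lt_last b')) (lt_irrefl _)
    | cast a' =>
      rw [Fin.snoc_castSucc, Fin.snoc_castSucc]
      exact hs (Fin.castSucc_le_castSucc_iff.mp hab)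

lemma monotone_init {j : ℕ} {t : Fin (j+1) → Fin (n+1)} (ht : Monotone t) :
    Monotone (Fin.init t : Fin j → Fin (n+1)) :=
  fun _ _ hab => ht (Fin.castSucc_le_castSucc_iff.mpr hab)

/-- the DP predicate -/
def Pred (j : ℕ) (i : Fin (n+1)) (k : ℕ) (s : Fin j → Fin (n+1)) : Prop :=
  Monotone s ∧ (∀ l : Fin j, j - k ≤ (l : ℕ) → s l = i) ∧
    (∀ l : Fin j, (l : ℕ) = j - k - 1 → k < j → s l < i)

/-- the weight of a sequence -/
noncomputable def wgt (j : ℕ) (s : Fin j → Fin (n+1)) : ℝ :=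
  (1 / gammaSeq n j s) *
    ∏ l : Fin j, phi ε n q (prev n j s l) (s l) ((l : ℕ) + 1) * tau n x (s l)

/-- the right-hand side of the theorem -/
noncomputable def rhs (j : ℕ) (i : Fin (n+1)) (k : ℕ) : ℝ :=
  ∑ s ∈ Finset.univ.filter (fun s : Fin j → Fin (n + 1) => Pred j i k s), wgt ε q x j s

lemma card_tail (j c : ℕ) : (Finset.univ.filter (fun l : Fin j => c ≤ (l : ℕ))).card = j - c := by
  rw [Finset.card_filter, Fin.sum_univ_eq_sum_range (fun l => if c ≤ l then 1 else 0) j,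
      ← Finset.card_filter]
  rw [show Finset.filter (fun l => c ≤ l) (Finset.range j) = Finset.Ico c j by
    ext a; simp [Finset.mem_filter, Finset.mem_range, Finset.mem_Ico]; omega]
  exact Nat.card_Ico c j

end auxSection

section auxSection2
variable {n : ℕ} (ε : ℝ) (q x : ℕ → ℝ)

lemma wgt_snoc {j : ℕ} (hj : 0 < j) (s : Fin j → Fin (n+1)) (y : Fin (n+1)) :
    wgt ε q x (j+1) (Fin.snoc s y)
      = wgt ε q x j s * (phi ε n q (s ⟨j-1, by omega⟩) y (j+1) * tau n x y)
        / (((Finset.univ.filter (fun l : Fin j => s l = y)).card : ℝ) + 1) := by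
  unfold wgt
  rw [gamma_snoc, prod_snoc ε q x hj]
  rw [one_div, mul_inv, ← one_div, ← one_div]
  ring

lemma rhs_one (i : Fin (n+1)) : rhs ε q x 1 i 1 = phi ε n q 0 i 1 * tau n x i := by
  unfold rhs
  have hset : Finset.univ.filter (fun s : Fin 1 → Fin (n+1) => Pred 1 i 1 s)
      = {fun _ => i} := by
    ext s
    rw [Finset.mem_filter, Finset.mem_singleton]
    simp only [Finset.mem_univ, true_and, Pred]
    constructor
    · rintro ⟨-, h2, -⟩
      funext l
      exact h2 l (by omega)
    · rintro rfl
      exact ⟨monotone_const, fun l _ => rfl, fun l hl hk => by omega⟩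
  rw [hset, Finset.sum_singleton]
  unfold wgt
  have hγ : gammaSeq n 1 (fun _ => i) = 1 := by
    unfold gammaSeq
    apply Finset.prod_eq_one
    intro i' _
    by_cases h : i = i' <;> simp [Finset.filter_const, h, Nat.factorial]
  rw [hγ, Fin.prod_univ_one]
  have hprev : prev n 1 (fun _ => i) 0 = 0 := by unfold prev; rfl
  rw [hprev]
  norm_num

lemma cnt_of_pred {j k : ℕ} (hj : 0 < j) (hk1 : 1 ≤ k) (hkj : k ≤ j) {i : Fin (n+1)}
    {s : Fin j → Fin (n+1)} (h : Pred j i k s) :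
    (Finset.univ.filter (fun l : Fin j => s l = i)).card = k := by
  have hset : Finset.univ.filter (fun l : Fin j => s l = i)
      = Finset.univ.filter (fun l : Fin j => j - k ≤ (l : ℕ)) := by
    ext l
    simp only [Finset.mem_filter, Finset.mem_univ, true_and]
    constructor
    · intro hl
      by_contra hcon
      push_neg at hcon
      have hkj' : k < j := by omega
      have hl3 := h.2.2 ⟨j - k - 1, by omega⟩ rfl hkj'
      have hmon : s l ≤ s ⟨j - k - 1, by omega⟩ := h.1 (by simp [Fin.le_def]; omega)
      rw [hl] at hmon
      exact absurd (lt_of_le_of_lt hmon hl3) (lt_irrefl _)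
    · exact h.2.1 l
  rw [hset, card_tail]
  omega

lemma pred_init_two {j k : ℕ} (hj : 0 < j) (hk : 2 ≤ k) (hkj : k ≤ j+1) {i : Fin (n+1)}
    {t : Fin (j+1) → Fin (n+1)} (h : Pred (j+1) i k t) : Pred j i (k-1) (Fin.init t) := by
  obtain ⟨h1, h2, h3⟩ := h
  refine ⟨monotone_init h1, ?_, ?_⟩
  · intro l hl
    exact h2 (Fin.castSucc l) (by simp; omega)
  · intro l hl hk'
    exact h3 (Fin.castSucc l) (by simp; omega) (by omega)

lemma pred_snoc_two {j k : ℕ} (hj : 0 < j) (hk : 2 ≤ k) (hkj : k ≤ j+1) {i : Fin (n+1)}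
    {s : Fin j → Fin (n+1)} (h : Pred j i (k-1) s) : Pred (j+1) i k (Fin.snoc s i) := by
  obtain ⟨h1, h2, h3⟩ := h
  have htop : s ⟨j-1, by omega⟩ = i := h2 ⟨j-1, by omega⟩ (by simp; omega)
  have hle : ∀ l, s l ≤ i := by
    intro l
    calc s l ≤ s ⟨j-1, by omega⟩ := h1 (by simp [Fin.le_def]; omega)
    _ = i := htop
  refine ⟨monotone_snoc h1 hle, ?_, ?_⟩
  · intro l hl
    induction l using Fin.lastCases with
    | last => exact Fin.snoc_last _ _
    | cast l' =>
      rw [Fin.snoc_castSucc]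
      simp only [Fin.coe_castSucc] at hl
      exact h2 l' (by omega)
  · intro l hl hk'
    have hlt : (l : ℕ) < j := by omega
    rw [snoc_val_lt s i l hlt]
    exact h3 ⟨(l : ℕ), hlt⟩ (by simp; omega) (by omega)

lemma rhs_succ_two {j k : ℕ} (hj : 0 < j) (hk : 2 ≤ k) (hkj : k ≤ j + 1) (i : Fin (n+1)) :
    rhs ε q x (j+1) i k = tau n x i * phi ε n q i i (j+1) * rhs ε q x j i (k-1) / k := by
  unfold rhs
  rw [Finset.mul_sum, Finset.sum_div]
  apply Finset.sum_nbij' (fun t => Fin.init t) (fun s => Fin.snoc s i)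
  · intro t ht
    simp only [Finset.mem_filter, Finset.mem_univ, true_and] at ht ⊢
    exact pred_init_two hj hk hkj ht
  · intro s hs
    simp only [Finset.mem_filter, Finset.mem_univ, true_and] at hs ⊢
    exact pred_snoc_two hj hk hkj hs
  · intro t ht
    simp only [Finset.mem_filter, Finset.mem_univ, true_and] at ht
    have hti : t (Fin.last j) = i := ht.2.1 (Fin.last j) (by simp; omega)
    rw [← hti]
    exact Fin.snoc_init_self t
  · intro s _
    exact Fin.init_snoc (α := fun _ : Fin (j+1) => Fin (n+1)) i s
  · intro t ht
    simp only [Finset.mem_filter, Finset.mem_univ, true_and] at ht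
    have hti : t (Fin.last j) = i := ht.2.1 (Fin.last j) (by simp; omega)
    have hrw : t = Fin.snoc (Fin.init t) i := by
      rw [← hti]; exact (Fin.snoc_init_self t).symm
    have hpred : Pred j i (k-1) (Fin.init t) := pred_init_two hj hk hkj ht
    conv_lhs => rw [hrw]
    rw [wgt_snoc ε q x hj]
    rw [show Fin.init t ⟨j-1, by omega⟩ = i from hpred.2.1 ⟨j-1, by omega⟩ (by simp; omega)]
    rw [cnt_of_pred hj (by omega) (by omega) hpred]
    rw [show ((k-1 : ℕ) : ℝ) + 1 = (k : ℝ) by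
      rw [Nat.cast_sub (by omega : 1 ≤ k)]; push_cast; ring]
    ring

end auxSection2

section auxSection3
variable {n : ℕ} (ε : ℝ) (q x : ℕ → ℝ)

lemma partition {j : ℕ} (hj : 0 < j) (i' : Fin (n+1)) :
    Finset.univ.filter (fun s : Fin j → Fin (n+1) => Monotone s ∧ s ⟨j-1, by omega⟩ = i')
      = (Finset.Ico 1 (j+1)).biUnion
          (fun k => Finset.univ.filter (fun s : Fin j → Fin (n+1) => Pred j i' k s)) := by
  ext s
  simp only [Finset.mem_filter, Finset.mem_univ, true_and, Finset.mem_biUnion, Finset.mem_Ico]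
  constructor
  · rintro ⟨hmono, hlast⟩
    have hex : ∃ l, ∃ h : l < j, s ⟨l, h⟩ = i' := ⟨j-1, by omega, hlast⟩
    set l0 := Nat.find hex with hl0def
    obtain ⟨hl0j, hl0⟩ := Nat.find_spec hex
    have hl0le : l0 ≤ j - 1 := Nat.find_min' hex ⟨by omega, hlast⟩
    refine ⟨j - l0, ⟨by omega, by omega⟩, hmono, ?_, ?_⟩
    · intro l hl
      have h1 : s ⟨l0, hl0j⟩ ≤ s l := hmono (by simp [Fin.le_def]; omega)
      have h2 : s l ≤ s ⟨j-1, by omega⟩ := hmono (by simp [Fin.le_def]; omega)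
      rw [hl0] at h1; rw [hlast] at h2
      exact le_antisymm h2 h1
    · intro l hl hk
      have hl0pos : 0 < l0 := by omega
      have hlval : (l : ℕ) = l0 - 1 := by omega
      have hmin := Nat.find_min hex (m := l0 - 1) (by omega)
      push_neg at hmin
      have hne : s l ≠ i' := by
        rw [show l = ⟨l0 - 1, by omega⟩ from Fin.ext hlval]
        exact hmin (by omega)
      have hle : s l ≤ s ⟨j-1, by omega⟩ := hmono (by simp [Fin.le_def]; omega)
      rw [hlast] at hle
      exact lt_of_le_of_ne hle hne
  · rintro ⟨k, ⟨hk1, hkj⟩, hmono, h2, _⟩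
    exact ⟨hmono, h2 _ (by simp; omega)⟩

lemma pred_disj {j : ℕ} (hj : 0 < j) (i' : Fin (n+1)) :
    ∀ k1 ∈ Finset.Ico 1 (j+1), ∀ k2 ∈ Finset.Ico 1 (j+1), k1 ≠ k2 →
      Disjoint (Finset.univ.filter (fun s : Fin j → Fin (n+1) => Pred j i' k1 s))
               (Finset.univ.filter (fun s : Fin j → Fin (n+1) => Pred j i' k2 s)) := by
  have key : ∀ k1 k2, 1 ≤ k1 → k1 < k2 → k2 ≤ j → ∀ s : Fin j → Fin (n+1),
      Pred j i' k1 s → Pred j i' k2 s → False := by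
    intro k1 k2 h1 h12 h2j s hp1 hp2
    have hlt : j - k1 - 1 < j := by omega
    have hlt1 := hp1.2.2 ⟨j - k1 - 1, hlt⟩ rfl (by omega)
    have heq := hp2.2.1 ⟨j - k1 - 1, hlt⟩ (by simp; omega)
    rw [heq] at hlt1
    exact lt_irrefl _ hlt1
  intro k1 hk1 k2 hk2 hne
  simp only [Finset.mem_Ico] at hk1 hk2
  rw [Finset.disjoint_left]
  intro s hs1 hs2
  simp only [Finset.mem_filter, Finset.mem_univ, true_and] at hs1 hs2
  rcases hne.lt_or_gt with h | h
  · exact key k1 k2 (by omega) h (by omega) s hs1 hs2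
  · exact key k2 k1 (by omega) h (by omega) s hs2 hs1

lemma sum_partition {j : ℕ} (hj : 0 < j) (i' : Fin (n+1)) :
    ∑ s ∈ Finset.univ.filter
        (fun s : Fin j → Fin (n+1) => Monotone s ∧ s ⟨j-1, by omega⟩ = i'),
      wgt ε q x j s = ∑ k ∈ Finset.Ico 1 (j+1), rhs ε q x j i' k := by
  rw [partition hj i', Finset.sum_biUnion (pred_disj hj i')]
  rfl

lemma rhs_succ_one {j : ℕ} (hj : 0 < j) (i : Fin (n+1)) :
    rhs ε q x (j+1) i 1
      = tau n x i * ∑ i' ∈ Finset.univ.filter (fun i' : Fin (n+1) => i' < i),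
          phi ε n q i' i (j+1) * ∑ k ∈ Finset.Ico 1 (j+1), rhs ε q x j i' k := by
  have hjj : j - 1 < j := by omega
  have step1 : rhs ε q x (j+1) i 1
      = ∑ s ∈ Finset.univ.filter
            (fun s : Fin j → Fin (n+1) => Monotone s ∧ s ⟨j-1, hjj⟩ < i),
          wgt ε q x j s * (phi ε n q (s ⟨j-1, hjj⟩) i (j+1) * tau n x i) := by
    unfold rhs
    apply Finset.sum_nbij' (fun t => Fin.init t) (fun s => Fin.snoc s i)
    · intro t ht
      simp only [Finset.mem_filter, Finset.mem_univ, true_and] at ht ⊢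
      obtain ⟨h1, h2, h3⟩ := ht
      exact ⟨monotone_init h1,
        h3 (Fin.castSucc ⟨j-1, hjj⟩) (by simp only [Fin.coe_castSucc]; omega) (by omega)⟩
    · intro s hs
      simp only [Finset.mem_filter, Finset.mem_univ, true_and] at hs ⊢
      obtain ⟨h1, h2⟩ := hs
      have hle : ∀ l, s l ≤ i := fun l =>
        le_of_lt (lt_of_le_of_lt (h1 (a := l) (b := ⟨j-1, hjj⟩) (by simp [Fin.le_def]; omega)) h2)
      refine ⟨monotone_snoc h1 hle, ?_, ?_⟩
      · intro l hl
        induction l using Fin.lastCases with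
        | last => exact Fin.snoc_last _ _
        | cast l' => simp only [Fin.coe_castSucc] at hl; omega
      · intro l hl _
        have hlt : (l : ℕ) < j := by omega
        rw [snoc_val_lt s i l hlt]
        rw [show (⟨(l : ℕ), hlt⟩ : Fin j) = ⟨j-1, hjj⟩ from Fin.mk_eq_mk.mpr (by omega)]
        exact h2
    · intro t ht
      simp only [Finset.mem_filter, Finset.mem_univ, true_and] at ht
      have hti : t (Fin.last j) = i := ht.2.1 (Fin.last j) (by simp)
      rw [← hti]
      exact Fin.snoc_init_self t
    · intro s _
      exact Fin.init_snoc (α := fun _ : Fin (j+1) => Fin (n+1)) i s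
    · intro t ht
      simp only [Finset.mem_filter, Finset.mem_univ, true_and] at ht
      have hti : t (Fin.last j) = i := ht.2.1 (Fin.last j) (by simp)
      have hrw : t = Fin.snoc (Fin.init t) i := by
        rw [← hti]; exact (Fin.snoc_init_self t).symm
      have hlast : Fin.init t ⟨j-1, hjj⟩ < i :=
        ht.2.2 (Fin.castSucc ⟨j-1, hjj⟩) (by simp only [Fin.coe_castSucc]; omega) (by omega)
      have hcnt : (Finset.univ.filter (fun l : Fin j => Fin.init t l = i)).card = 0 := by
        rw [Finset.card_eq_zero, Finset.filter_eq_empty_iff]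
        intro l _ hcon
        have hmon : Fin.init t l ≤ Fin.init t ⟨j-1, hjj⟩ :=
          (monotone_init ht.1) (by simp [Fin.le_def]; omega)
        rw [hcon] at hmon
        exact absurd (lt_of_le_of_lt hmon hlast) (lt_irrefl _)
      conv_lhs => rw [hrw]
      rw [wgt_snoc ε q x hj, hcnt]
      norm_num
  rw [step1, Finset.mul_sum]
  rw [← Finset.sum_fiberwise_of_maps_to
      (g := fun s : Fin j → Fin (n+1) => s ⟨j-1, hjj⟩)
      (t := Finset.univ.filter (fun i' : Fin (n+1) => i' < i))
      (fun s hs => by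
        simp only [Finset.mem_filter, Finset.mem_univ, true_and] at hs ⊢
        exact hs.2)]
  apply Finset.sum_congr rfl
  intro i' hi'
  simp only [Finset.mem_filter, Finset.mem_univ, true_and] at hi'
  rw [Finset.filter_filter]
  rw [show Finset.univ.filter
        (fun s : Fin j → Fin (n+1) => (Monotone s ∧ s ⟨j-1, hjj⟩ < i) ∧ s ⟨j-1, hjj⟩ = i')
      = Finset.univ.filter
        (fun s : Fin j → Fin (n+1) => Monotone s ∧ s ⟨j-1, by omega⟩ = i') by
    ext s
    simp only [Finset.mem_filter, Finset.mem_univ, true_and]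
    constructor
    · rintro ⟨⟨h1, _⟩, h3⟩; exact ⟨h1, h3⟩
    · rintro ⟨h1, h2⟩; exact ⟨⟨h1, h2 ▸ hi'⟩, h2⟩]
  rw [show (∑ s ∈ Finset.univ.filter
        (fun s : Fin j → Fin (n+1) => Monotone s ∧ s ⟨j-1, by omega⟩ = i'),
      wgt ε q x j s * (phi ε n q (s ⟨j-1, hjj⟩) i (j+1) * tau n x i))
      = ∑ s ∈ Finset.univ.filter
        (fun s : Fin j → Fin (n+1) => Monotone s ∧ s ⟨j-1, by omega⟩ = i'),
      tau n x i * (phi ε n q i' i (j+1) * wgt ε q x j s) from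
    Finset.sum_congr rfl (fun s hs => by
      simp only [Finset.mem_filter, Finset.mem_univ, true_and] at hs
      rw [hs.2]; ring)]
  rw [← Finset.mul_sum, ← Finset.mul_sum, sum_partition ε q x hj i']

end auxSection3


/-- Correctness of the forward dynamic program: if `α` satisfies the JointExp recursion, then
`α(j,i,k)` equals the total unnormalized probability mass
`∑_{s ∈ S↗(j,i,k)} (1/γ(s)) ∏_{j'=1}^{j} φ(i_{j'−1}, i_{j'}, j')·τ(i_{j'})`
of nondecreasing prefix sequences of length `j` ending with exactly `k` copies of interval `i`. -/
theorem alpha_correct (a b : ℝ) (hab : a < b) (ε : ℝ) (hε : 0 < ε)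
    (n m : ℕ) (hn : 1 ≤ n) (hm : 1 ≤ m)
    (q : ℕ → ℝ) (hq0 : q 0 = 0) (hqtop : q (m + 1) = 1)
    (hqmono : ∀ j ≤ m, q j < q (j + 1))
    (x : ℕ → ℝ) (hx0 : x 0 = a) (hxtop : x (n + 1) = b)
    (hxmono : ∀ i ≤ n, x i ≤ x (i + 1))
    (α : ℕ → Fin (n + 1) → ℕ → ℝ)
    (hbase1 : ∀ i, α 1 i 1 = phi ε n q 0 i 1 * tau n x i)
    (hbase2 : ∀ i k, 1 < k → α 1 i k = 0)
    (hrec1 : ∀ j, 2 ≤ j → j ≤ m → ∀ i, α j i 1 =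
      tau n x i * ∑ i' ∈ Finset.univ.filter (fun i' : Fin (n + 1) => i' < i),
        phi ε n q i' i j * ∑ k ∈ Finset.Ico 1 j, α (j - 1) i' k)
    (hrec2 : ∀ j, 2 ≤ j → j ≤ m → ∀ i k, 1 < k →
      α j i k = tau n x i * phi ε n q i i j * α (j - 1) i (k - 1) / k)
    (j : ℕ) (hj1 : 1 ≤ j) (hjm : j ≤ m)
    (i : Fin (n + 1)) (k : ℕ) (hk1 : 1 ≤ k) (hkj : k ≤ j) :
    α j i k =
      ∑ s ∈ Finset.univ.filter (fun s : Fin j → Fin (n + 1) =>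
          Monotone s ∧ (∀ l : Fin j, j - k ≤ (l : ℕ) → s l = i) ∧
          (∀ l : Fin j, (l : ℕ) = j - k - 1 → k < j → s l < i)),
        (1 / gammaSeq n j s) *
          ∏ l : Fin j, phi ε n q (prev n j s l) (s l) ((l : ℕ) + 1) * tau n x (s l) := by
  have key : ∀ j, 1 ≤ j → j ≤ m → ∀ (i : Fin (n+1)) k, 1 ≤ k → k ≤ j →
      α j i k = rhs ε q x j i k := by
    intro j
    induction j with
    | zero => omega
    | succ j ih =>
      intro hj1 hjm i k hk1 hkj
      rcases Nat.eq_zero_or_pos j with rfl | hj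
      · have hk : k = 1 := by omega
        subst hk
        show α 1 i 1 = rhs ε q x 1 i 1
        rw [hbase1 i, rhs_one]
      · rcases eq_or_lt_of_le hk1 with hk | hk
        · rw [← hk]
          rw [hrec1 (j+1) (by omega) hjm i, rhs_succ_one ε q x hj i]
          congr 1
          apply Finset.sum_congr rfl
          intro i' _
          congr 1
          rw [Nat.add_sub_cancel]
          apply Finset.sum_congr rfl
          intro k' hk'
          simp only [Finset.mem_Ico] at hk'
          exact ih (by omega) (by omega) i' k' hk'.1 (by omega)
        · rw [hrec2 (j+1) (by omega) hjm i k hk,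
              rhs_succ_two ε q x hj (by omega) hkj i, Nat.add_sub_cancel,
              ih (by omega) (by omega) i (k-1) (by omega) (by omega)]
  rw [key j hj1 hjm i k hk1 hkj]
  unfold rhs wgt Pred
  congr
end

section
/- Let O be a finite nonempty set, ε > 0, Δ > 0, and let u, u' : O → ℝ satisfy |u(o) − u'(o)| ≤ Δ for every o ∈ O. Define probability mass functions p(o) = exp(ε·u(o)/(2Δ)) / ∑_{o' ∈ O} exp(ε·u(o')/(2Δ)) and p'(o) = exp(ε·u'(o)/(2Δ)) / ∑_{o' ∈ O} exp(ε·u'(o')/(2Δ)). Then for every o ∈ O, p(o) ≤ e^ε · p'(o). Consequently, the exponential mechanism, which on input X outputs o with probability proportional to exp(ε·u(X,o)/(2Δ_u)) where Δ_u bounds |u(X,o) − u(X',o)| over all neighboring datasets X, X' and outputs o, satisfies ε-differential privacy. -/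
open Finset

/-- The exponential mechanism is `ε`-differentially private: if the utility functions `u, u'`
of two neighboring datasets satisfy `|u(o) − u'(o)| ≤ Δ` pointwise, then the corresponding
output probabilities satisfy `p(o) ≤ e^ε · p'(o)` for every output `o`. -/
theorem expMech_dp {O : Type*} [Fintype O] [Nonempty O]
    (ε Δ : ℝ) (hε : 0 < ε) (hΔ : 0 < Δ)
    (u u' : O → ℝ) (hsens : ∀ o, |u o - u' o| ≤ Δ) (o : O) :
    Real.exp (ε * u o / (2 * Δ)) / (∑ o' : O, Real.exp (ε * u o' / (2 * Δ)))
      ≤ Real.exp ε *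
        (Real.exp (ε * u' o / (2 * Δ)) / (∑ o' : O, Real.exp (ε * u' o' / (2 * Δ)))) := by
  have hS : 0 < ∑ o' : O, Real.exp (ε * u o' / (2 * Δ)) :=
    Finset.sum_pos (fun _ _ => Real.exp_pos _) Finset.univ_nonempty
  have hS' : 0 < ∑ o' : O, Real.exp (ε * u' o' / (2 * Δ)) :=
    Finset.sum_pos (fun _ _ => Real.exp_pos _) Finset.univ_nonempty
  have h2Δ : (0:ℝ) < 2 * Δ := by linarith
  have key : ∀ a b : ℝ, a - b ≤ Δ →
      Real.exp (ε * a / (2 * Δ)) ≤ Real.exp (ε / 2) * Real.exp (ε * b / (2 * Δ)) := by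
    intro a b h1
    rw [← Real.exp_add]
    apply Real.exp_le_exp.2
    have heq : ε * a / (2 * Δ) - ε * b / (2 * Δ) = (ε * (a - b)) / (2 * Δ) := by ring
    have h3 : (ε * (a - b)) / (2 * Δ) ≤ (ε * Δ) / (2 * Δ) := by
      have := mul_le_mul_of_nonneg_left h1 hε.le
      gcongr
    have h4 : (ε * Δ) / (2 * Δ) = ε / 2 := by field_simp
    linarith
  rw [div_le_iff₀ hS, mul_comm (Real.exp ε), mul_assoc, div_mul_eq_mul_div, le_div_iff₀ hS']
  calc Real.exp (ε * u o / (2 * Δ)) * ∑ o' : O, Real.exp (ε * u' o' / (2 * Δ))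
      ≤ (Real.exp (ε / 2) * Real.exp (ε * u' o / (2 * Δ))) *
        ∑ o' : O, Real.exp (ε / 2) * Real.exp (ε * u o' / (2 * Δ)) := by
        apply mul_le_mul (key _ _ (abs_le.1 (hsens o)).2)
        · apply Finset.sum_le_sum
          intro i _
          have h := hsens i
          rw [abs_sub_comm] at h
          exact key _ _ (abs_le.1 h).2
        · exact hS'.le
        · positivity
    _ = Real.exp (ε * u' o / (2 * Δ)) * Real.exp ε *
        ∑ o' : O, Real.exp (ε * u o' / (2 * Δ)) := by
        rw [← Finset.mul_sum,
          show Real.exp ε = Real.exp (ε / 2) * Real.exp (ε / 2) by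
            rw [← Real.exp_add]; ring_nf]
        ring
    _ = Real.exp (ε * u' o / (2 * Δ)) *
        (Real.exp ε * ∑ o' : O, Real.exp (ε * u o' / (2 * Δ))) := by ring
end

section
/- Let Y be a finite nonempty set, ε > 0, Δ > 0, β ∈ (0,1], and u : Y → ℝ. Let p be the probability mass function on Y with p(y) proportional to exp(ε·u(y)/(2Δ)). Then the probability under p of the set {y ∈ Y : u(y) < max_{y* ∈ Y} u(y*) − 2Δ·ln(|Y|/β)/ε} is at most β. That is, with probability at least 1 − β, a sample y from the exponential mechanism satisfies u(y) ≥ max_{y*} u(y*) − 2Δ·ln(|Y|/β)/ε. -/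
open scoped Classical
open Finset

/-- Utility guarantee for the exponential mechanism: if `p(y) ∝ exp(ε·u(y)/(2Δ))` on the finite
nonempty output set `Y`, then the probability mass of
`{y : u(y) < max_{y*} u(y*) − 2Δ·ln(|Y|/β)/ε}` is at most `β`. -/
theorem expMech_utility {Y : Type*} [Fintype Y] [Nonempty Y]
    (ε Δ β : ℝ) (hε : 0 < ε) (hΔ : 0 < Δ) (hβ0 : 0 < β) (hβ1 : β ≤ 1) (u : Y → ℝ) :
    (∑ y ∈ Finset.univ.filter (fun y : Y =>
        u y < Finset.univ.sup' Finset.univ_nonempty u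
          - 2 * Δ * Real.log ((Fintype.card Y : ℝ) / β) / ε),
      Real.exp (ε * u y / (2 * Δ))) /
    (∑ y : Y, Real.exp (ε * u y / (2 * Δ))) ≤ β := by
  set M : ℝ := Finset.univ.sup' Finset.univ_nonempty u with hM
  set E : ℝ := ε * M / (2 * Δ) with hE
  have hn : (0:ℝ) < Fintype.card Y := by
    exact_mod_cast Fintype.card_pos
  have hratio : (0:ℝ) < (Fintype.card Y : ℝ) / β := div_pos hn hβ0
  -- denominator lower bound
  obtain ⟨y0, _, hy0⟩ := Finset.exists_mem_eq_sup' (Finset.univ_nonempty (α := Y)) u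
  have hS : Real.exp E ≤ ∑ y : Y, Real.exp (ε * u y / (2 * Δ)) := by
    have : Real.exp E = Real.exp (ε * u y0 / (2 * Δ)) := by rw [hE, hM, hy0]
    rw [this]
    exact Finset.single_le_sum (f := fun y => Real.exp (ε * u y / (2 * Δ)))
      (fun y _ => (Real.exp_pos _).le) (Finset.mem_univ y0)
  have hSpos : (0:ℝ) < ∑ y : Y, Real.exp (ε * u y / (2 * Δ)) :=
    lt_of_lt_of_le (Real.exp_pos E) hS
  rw [div_le_iff₀ hSpos]
  -- numerator bound
  have hterm : ∀ y ∈ Finset.univ.filter (fun y : Y =>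
      u y < M - 2 * Δ * Real.log ((Fintype.card Y : ℝ) / β) / ε),
      Real.exp (ε * u y / (2 * Δ)) ≤ β / (Fintype.card Y : ℝ) * Real.exp E := by
    intro y hy
    have hy' := (Finset.mem_filter.mp hy).2
    have h1 : ε * u y / (2 * Δ) < E - Real.log ((Fintype.card Y : ℝ) / β) := by
      rw [hE]
      have h2Δ : (0:ℝ) < 2 * Δ := by linarith
      rw [div_sub' (ne_of_gt h2Δ), div_lt_div_iff₀ h2Δ h2Δ]
      have : u y * ε < (M - 2 * Δ * Real.log ((Fintype.card Y : ℝ) / β) / ε) * ε := by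
        exact mul_lt_mul_of_pos_right hy' hε
      rw [sub_mul, div_mul_cancel₀ _ (ne_of_gt hε)] at this
      nlinarith
    calc Real.exp (ε * u y / (2 * Δ))
        ≤ Real.exp (E - Real.log ((Fintype.card Y : ℝ) / β)) := (Real.exp_le_exp.mpr h1.le)
      _ = β / (Fintype.card Y : ℝ) * Real.exp E := by
          rw [Real.exp_sub, Real.exp_log hratio]
          field_simp
  calc (∑ y ∈ Finset.univ.filter (fun y : Y =>
        u y < M - 2 * Δ * Real.log ((Fintype.card Y : ℝ) / β) / ε),
        Real.exp (ε * u y / (2 * Δ)))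
      ≤ ∑ _y ∈ Finset.univ.filter (fun y : Y =>
        u y < M - 2 * Δ * Real.log ((Fintype.card Y : ℝ) / β) / ε),
        (β / (Fintype.card Y : ℝ) * Real.exp E) := Finset.sum_le_sum hterm
    _ = (Finset.univ.filter (fun y : Y =>
        u y < M - 2 * Δ * Real.log ((Fintype.card Y : ℝ) / β) / ε)).card *
        (β / (Fintype.card Y : ℝ) * Real.exp E) := by rw [Finset.sum_const, nsmul_eq_mul]
    _ ≤ (Fintype.card Y : ℝ) * (β / (Fintype.card Y : ℝ) * Real.exp E) := by
        have hcard : ((Finset.univ.filter (fun y : Y =>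
            u y < M - 2 * Δ * Real.log ((Fintype.card Y : ℝ) / β) / ε)).card : ℝ)
            ≤ (Fintype.card Y : ℝ) := by
          have := Finset.card_filter_le (Finset.univ : Finset Y) (fun y : Y =>
            u y < M - 2 * Δ * Real.log ((Fintype.card Y : ℝ) / β) / ε)
          rw [Finset.card_univ] at this
          exact_mod_cast this
        have hnn : (0:ℝ) ≤ β / (Fintype.card Y : ℝ) * Real.exp E :=
          mul_nonneg (div_nonneg hβ0.le hn.le) (Real.exp_pos _).le
        exact mul_le_mul_of_nonneg_right hcard hnn
    _ = β * Real.exp E := by field_simp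
    _ ≤ β * ∑ y : Y, Real.exp (ε * u y / (2 * Δ)) := by
        exact mul_le_mul_of_nonneg_left hS hβ0.le
end

section
/- Let p_1, p'_1 be probability measures on a measurable space Y_1 and p_2, p'_2 probability measures on a measurable space Y_2. Suppose ε_1, ε_2 ≥ 0 and δ_1, δ_2 ≥ 0 are such that for every measurable S_1 ⊆ Y_1, p_1(S_1) ≤ e^{ε_1}·p'_1(S_1) + δ_1, and for every measurable S_2 ⊆ Y_2, p_2(S_2) ≤ e^{ε_2}·p'_2(S_2) + δ_2. Then for every measurable S ⊆ Y_1 × Y_2, the product measures satisfy (p_1 × p_2)(S) ≤ e^{ε_1 + ε_2}·(p'_1 × p'_2)(S) + δ_1 + δ_2. That is, the (nonadaptive) composition of an (ε_1, δ_1)-differentially private algorithm with an (ε_2, δ_2)-differentially private algorithm is (ε_1 + ε_2, δ_1 + δ_2)-differentially private. -/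
open MeasureTheory Set

/-- If `μ A ≤ c * ν A + δ` for all measurable `A`, the same bound holds for lower
integrals of measurable functions bounded by `1` (with `δ` not amplified). -/
lemma dp_lintegral_le {α : Type*} [MeasurableSpace α] (μ ν : Measure α) (c δ : ENNReal)
    (h : ∀ A : Set α, MeasurableSet A → μ A ≤ c * ν A + δ)
    (g : α → ENNReal) (hg : Measurable g) (hg1 : ∀ x, g x ≤ 1) :
    ∫⁻ x, g x ∂μ ≤ c * (∫⁻ x, g x ∂ν) + δ := by
  set f : α → ℝ := fun x => (g x).toReal with hf_def
  have hf : Measurable f := ENNReal.measurable_toReal.comp hg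
  have hfg : ∀ x, ENNReal.ofReal (f x) = g x := fun x =>
    ENNReal.ofReal_toReal (((hg1 x).trans_lt ENNReal.one_lt_top).ne)
  have hf1 : ∀ x, f x ≤ 1 := fun x => by
    rw [show (1 : ℝ) = (1 : ENNReal).toReal by simp]
    exact ENNReal.toReal_mono ENNReal.one_ne_top (hg1 x)
  have hf_nn : ∀ x, 0 ≤ f x := fun x => ENNReal.toReal_nonneg
  have key : ∀ (m : Measure α),
      ∫⁻ x, g x ∂m = ∫⁻ t in Ioi (0:ℝ), m {a | t ≤ f a} := by
    intro m
    rw [← lintegral_eq_lintegral_meas_le m (Filter.Eventually.of_forall hf_nn)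
      hf.aemeasurable]
    exact lintegral_congr fun x => (hfg x).symm
  rw [key μ, key ν]
  have hsplit : (Ioi (0:ℝ)) = Ioc (0:ℝ) 1 ∪ Ioi (1:ℝ) := by
    rw [Set.Ioc_union_Ioi_eq_Ioi zero_le_one]
  have hzero : ∀ (m : Measure α), ∫⁻ t in Ioi (1:ℝ), m {a | t ≤ f a} = 0 := by
    intro m
    have : ∫⁻ t in Ioi (1:ℝ), m {a | t ≤ f a} = ∫⁻ _ in Ioi (1:ℝ), (0:ENNReal) := by
      apply setLIntegral_congr_fun measurableSet_Ioi
      intro t ht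
      dsimp only
      have : {a | t ≤ f a} = ∅ := by
        ext a
        simp only [mem_setOf_eq, mem_empty_iff_false, iff_false, not_le]
        exact lt_of_le_of_lt (hf1 a) ht
      rw [this, measure_empty]
    rw [this, lintegral_zero]
  have hmeas : ∀ (m : Measure α), Measurable fun t : ℝ => m {a | t ≤ f a} := by
    intro m
    have : ∀ t : ℝ, {a | t ≤ f a} = f ⁻¹' Ici t := fun t => rfl
    apply Antitone.measurable
    intro s t hst
    exact measure_mono fun a ha => le_trans hst ha
  have hdisj : Disjoint (Ioc (0:ℝ) 1) (Ioi (1:ℝ)) := by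
    rw [Set.disjoint_left]
    rintro t ⟨_, ht1⟩ ht1'
    exact absurd ht1' (not_lt.mpr ht1)
  have hIμ : ∫⁻ t in Ioi (0:ℝ), μ {a | t ≤ f a}
      = ∫⁻ t in Ioc (0:ℝ) 1, μ {a | t ≤ f a} := by
    rw [hsplit, lintegral_union measurableSet_Ioi hdisj, hzero μ, add_zero]
  rw [hIμ]
  calc ∫⁻ t in Ioc (0:ℝ) 1, μ {a | t ≤ f a}
      ≤ ∫⁻ t in Ioc (0:ℝ) 1, (c * ν {a | t ≤ f a} + δ) := by
        apply lintegral_mono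
        intro t
        exact h _ (hf measurableSet_Ici)
    _ = c * (∫⁻ t in Ioc (0:ℝ) 1, ν {a | t ≤ f a}) + δ * volume (Ioc (0:ℝ) 1) := by
        rw [lintegral_add_right _ measurable_const, lintegral_const,
          lintegral_const_mul _ (hmeas ν), Measure.restrict_apply_univ]
    _ ≤ c * (∫⁻ t in Ioi (0:ℝ), ν {a | t ≤ f a}) + δ * volume (Ioc (0:ℝ) 1) := by
        gcongr
        exact Set.Ioc_subset_Ioi_self
    _ = c * (∫⁻ t in Ioi (0:ℝ), ν {a | t ≤ f a}) + δ := by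
        rw [Real.volume_Ioc]
        simp

/-- For `a b d : ℝ≥0∞`: `min 1 (a + d) ≤ min 1 a + d`. -/
lemma min_one_add_le (a d : ENNReal) : min 1 (a + d) ≤ min 1 a + d := by
  rcases le_total (1 : ENNReal) a with h | h
  · calc min 1 (a + d) ≤ 1 := min_le_left _ _
      _ ≤ min 1 a + d := by rw [min_eq_left h]; exact le_add_right le_rfl
  · rw [min_eq_right h]
    rcases le_total (1 : ENNReal) (a + d) with h' | h'
    · rw [min_eq_left h']; exact h'
    · rw [min_eq_right h']

/-- Basic composition of differential privacy: if `p₁(S₁) ≤ e^{ε₁}·p₁'(S₁) + δ₁` and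
`p₂(S₂) ≤ e^{ε₂}·p₂'(S₂) + δ₂` for all measurable sets, then the product measures satisfy
`(p₁ × p₂)(S) ≤ e^{ε₁+ε₂}·(p₁' × p₂')(S) + δ₁ + δ₂` for every measurable `S ⊆ Y₁ × Y₂`. -/
theorem dp_composition {Y₁ Y₂ : Type*} [MeasurableSpace Y₁] [MeasurableSpace Y₂]
    (p₁ p₁' : Measure Y₁) (p₂ p₂' : Measure Y₂)
    [IsProbabilityMeasure p₁] [IsProbabilityMeasure p₁']
    [IsProbabilityMeasure p₂] [IsProbabilityMeasure p₂']
    (ε₁ ε₂ δ₁ δ₂ : ℝ) (hε₁ : 0 ≤ ε₁) (hε₂ : 0 ≤ ε₂) (hδ₁ : 0 ≤ δ₁) (hδ₂ : 0 ≤ δ₂)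
    (h₁ : ∀ S₁ : Set Y₁, MeasurableSet S₁ →
      p₁ S₁ ≤ ENNReal.ofReal (Real.exp ε₁) * p₁' S₁ + ENNReal.ofReal δ₁)
    (h₂ : ∀ S₂ : Set Y₂, MeasurableSet S₂ →
      p₂ S₂ ≤ ENNReal.ofReal (Real.exp ε₂) * p₂' S₂ + ENNReal.ofReal δ₂)
    (S : Set (Y₁ × Y₂)) (hS : MeasurableSet S) :
    (p₁.prod p₂) S ≤ ENNReal.ofReal (Real.exp (ε₁ + ε₂)) * (p₁'.prod p₂') S
      + ENNReal.ofReal (δ₁ + δ₂) := by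
  set c₁ := ENNReal.ofReal (Real.exp ε₁)
  set c₂ := ENNReal.ofReal (Real.exp ε₂)
  set d₁ := ENNReal.ofReal δ₁
  set d₂ := ENNReal.ofReal δ₂
  have hc : ENNReal.ofReal (Real.exp (ε₁ + ε₂)) = c₁ * c₂ := by
    rw [Real.exp_add, ENNReal.ofReal_mul (Real.exp_nonneg ε₁)]
  have hd : ENNReal.ofReal (δ₁ + δ₂) = d₁ + d₂ := ENNReal.ofReal_add hδ₁ hδ₂
  rw [hc, hd, Measure.prod_apply hS, Measure.prod_apply hS]
  set g : Y₁ → ENNReal := fun x => p₂' (Prod.mk x ⁻¹' S) with hg_def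
  have hg : Measurable g := measurable_measure_prodMk_left hS
  set G : Y₁ → ENNReal := fun x => min 1 (c₂ * g x) with hG_def
  have hG : Measurable G := measurable_const.min (hg.const_mul c₂)
  have hG1 : ∀ x, G x ≤ 1 := fun x => min_le_left _ _
  have step1 : ∫⁻ x, p₂ (Prod.mk x ⁻¹' S) ∂p₁ ≤ ∫⁻ x, (G x + d₂) ∂p₁ := by
    apply lintegral_mono
    intro x
    have h2x : p₂ (Prod.mk x ⁻¹' S) ≤ min 1 (c₂ * g x + d₂) :=
      le_min prob_le_one (h₂ _ (measurable_prodMk_left hS))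
    exact h2x.trans (min_one_add_le _ _)
  have step2 : ∫⁻ x, (G x + d₂) ∂p₁ = (∫⁻ x, G x ∂p₁) + d₂ := by
    rw [lintegral_add_right _ measurable_const, lintegral_const, measure_univ, mul_one]
  have step3 : ∫⁻ x, G x ∂p₁ ≤ c₁ * (∫⁻ x, G x ∂p₁') + d₁ :=
    dp_lintegral_le p₁ p₁' c₁ d₁ h₁ G hG hG1
  have step4 : ∫⁻ x, G x ∂p₁' ≤ c₂ * (∫⁻ x, g x ∂p₁') := by
    rw [← lintegral_const_mul _ hg]
    exact lintegral_mono fun x => min_le_right _ _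
  calc ∫⁻ x, p₂ (Prod.mk x ⁻¹' S) ∂p₁
      ≤ ∫⁻ x, G x ∂p₁ + d₂ := step1.trans_eq step2
    _ ≤ (c₁ * (∫⁻ x, G x ∂p₁') + d₁) + d₂ := by gcongr
    _ ≤ (c₁ * (c₂ * (∫⁻ x, g x ∂p₁')) + d₁) + d₂ := by gcongr
    _ = c₁ * c₂ * (∫⁻ x, p₂' (Prod.mk x ⁻¹' S) ∂p₁') + (d₁ + d₂) := by
        rw [mul_assoc]; ring
end

section
/- Let N ≥ 1, let p_1,...,p_N > 0 be positive reals, and let U_1,...,U_N be independent random variables each uniformly distributed on (0,1). Then for each k ∈ {1,...,N}, the probability that ln(ln(1/U_k)) − ln(p_k) < ln(ln(1/U_j)) − ln(p_j) for all j ≠ k equals p_k / ∑_{j=1}^N p_j. In particular, the argmin R = argmin_{k ∈ [N]} [ln(ln(1/U_k)) − ln(p_k)] is almost surely unique and satisfies P[R = k] = p_k / ∑_{j=1}^N p_j. -/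
open MeasureTheory ProbabilityTheory

lemma racing_key {pk pj a b : ℝ} (hpk : 0 < pk) (hpj : 0 < pj)
    (ha : a ∈ Set.Ioo (0:ℝ) 1) (hb : b ∈ Set.Ioo (0:ℝ) 1) :
    (Real.log (Real.log (1/a)) - Real.log pk < Real.log (Real.log (1/b)) - Real.log pj)
      ↔ b < a ^ (pj / pk) := by
  have hla : 0 < Real.log (1/a) := Real.log_pos (by rw [one_div]; exact one_lt_inv₀ ha.1 |>.2 ha.2)
  have hlb : 0 < Real.log (1/b) := Real.log_pos (by rw [one_div]; exact one_lt_inv₀ hb.1 |>.2 hb.2)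
  rw [← Real.log_div hla.ne' hpk.ne', ← Real.log_div hlb.ne' hpj.ne',
    Real.log_lt_log_iff (by positivity), div_lt_div_iff₀ hpk hpj, one_div, one_div,
    Real.log_inv, Real.log_inv,
    ← Real.log_lt_log_iff hb.1 (x := b) (y := a ^ (pj/pk)), Real.log_rpow ha.1]
  constructor
  · intro h
    rw [div_mul_eq_mul_div, lt_div_iff₀ hpk]
    nlinarith
  · intro h
    rw [div_mul_eq_mul_div, lt_div_iff₀ hpk] at h
    nlinarith
  · exact Real.rpow_pos_of_pos ha.1 _
  · exact div_pos hlb hpj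

/-- The "racing" sampling method: if `U_1, …, U_N` are i.i.d. uniform on `(0,1)` and
`p_1, …, p_N > 0`, then for each `k`, the probability that
`ln(ln(1/U_k)) − ln(p_k) < ln(ln(1/U_j)) − ln(p_j)` for all `j ≠ k`
equals `p_k / ∑_j p_j`. -/
theorem racing_sampling {Ω : Type*} [MeasurableSpace Ω] (μ : Measure Ω)
    [IsProbabilityMeasure μ]
    (N : ℕ) (hN : 1 ≤ N) (p : Fin N → ℝ) (hp : ∀ k, 0 < p k)
    (U : Fin N → Ω → ℝ) (hUmeas : ∀ k, Measurable (U k))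
    (hUlaw : ∀ k, Measure.map (U k) μ = volume.restrict (Set.Ioo (0 : ℝ) 1))
    (hindep : iIndepFun U μ) (k : Fin N) :
    μ {ω | ∀ j, j ≠ k →
        Real.log (Real.log (1 / U k ω)) - Real.log (p k) <
          Real.log (Real.log (1 / U j ω)) - Real.log (p j)}
      = ENNReal.ofReal (p k / ∑ j, p j) := by
  obtain ⟨n, rfl⟩ : ∃ n, N = n + 1 := ⟨N - 1, (Nat.succ_pred_eq_of_pos hN).symm⟩
  set ν : Fin (n+1) → Measure ℝ := fun _ => volume.restrict (Set.Ioo (0:ℝ) 1) with hν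
  haveI hprob : ∀ i : Fin (n+1), IsProbabilityMeasure (ν i) := fun i =>
    ⟨by simp [hν, Real.volume_Ioo]⟩
  -- joint law
  have hmeas_joint : Measurable (fun ω (i : Fin (n+1)) => U i ω) :=
    measurable_pi_lambda _ hUmeas
  have hjoint : Measure.map (fun ω i => U i ω) μ = Measure.pi ν := by
    refine (Measure.pi_eq fun s hs => ?_).symm
    rw [Measure.map_apply hmeas_joint (MeasurableSet.univ_pi hs)]
    have hpre : (fun ω i => U i ω) ⁻¹' Set.pi Set.univ s = ⋂ i ∈ Finset.univ, U i ⁻¹' s i := by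
      ext ω; simp [Set.mem_pi]
    rw [hpre, hindep.measure_inter_preimage_eq_mul Finset.univ (fun i _ => hs i)]
    exact Finset.prod_congr rfl fun i _ => by
      rw [← Measure.map_apply (hUmeas i) (hs i), hUlaw i]
  set q : Fin (n+1) → ℝ := fun j => p j / p k with hq
  set S' : Set (Fin (n+1) → ℝ) := {x | ∀ j, j ≠ k →
      Real.log (Real.log (1 / x k)) - Real.log (p k) <
        Real.log (Real.log (1 / x j)) - Real.log (p j)} with hS'
  set S : Set (Fin (n+1) → ℝ) := {x | ∀ j, j ≠ k → x j < x k ^ q j} with hS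
  have hS'meas : MeasurableSet S' := by
    have : S' = ⋂ j, ⋂ (_ : j ≠ k), {x : Fin (n+1) → ℝ |
        Real.log (Real.log (1 / x k)) - Real.log (p k) <
          Real.log (Real.log (1 / x j)) - Real.log (p j)} := by
      ext x; simp [hS', Set.mem_setOf_eq]
    rw [this]
    refine MeasurableSet.iInter fun j => MeasurableSet.iInter fun _ => ?_
    apply measurableSet_lt
    · exact ((Real.measurable_log.comp (Real.measurable_log.comp
        (measurable_const.div (measurable_pi_apply k)))).sub measurable_const)
    · exact ((Real.measurable_log.comp (Real.measurable_log.comp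
        (measurable_const.div (measurable_pi_apply j)))).sub measurable_const)
  have hSmeas : MeasurableSet S := by
    have : S = ⋂ j, ⋂ (_ : j ≠ k), {x : Fin (n+1) → ℝ | x j < x k ^ q j} := by
      ext x; simp [hS, Set.mem_setOf_eq]
    rw [this]
    refine MeasurableSet.iInter fun j => MeasurableSet.iInter fun _ => ?_
    exact measurableSet_lt (measurable_pi_apply j) (by fun_prop)
  -- event rewriting
  have hevent : {ω | ∀ j, j ≠ k →
        Real.log (Real.log (1 / U k ω)) - Real.log (p k) <
          Real.log (Real.log (1 / U j ω)) - Real.log (p j)}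
      = (fun ω i => U i ω) ⁻¹' S' := rfl
  rw [hevent, ← Measure.map_apply hmeas_joint hS'meas, hjoint]
  -- a.e. equality of S' and S
  have hbox : (Measure.pi ν) (Set.pi Set.univ fun _ : Fin (n+1) => Set.Ioo (0:ℝ) 1)ᶜ = 0 := by
    have h1 : (Measure.pi ν) (Set.pi Set.univ fun _ : Fin (n+1) => Set.Ioo (0:ℝ) 1) = 1 := by
      rw [Measure.pi_pi]
      simp [hν, Real.volume_Ioo]
    haveI ipi : IsProbabilityMeasure (Measure.pi ν) := ⟨by
      rw [← Set.pi_univ Set.univ, Measure.pi_pi]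
      simp [hν]⟩
    rw [measure_compl (MeasurableSet.univ_pi fun _ => measurableSet_Ioo) (by simp [h1]), h1]
    simp
  have hae : S' =ᵐ[Measure.pi ν] S := by
    rw [Filter.eventuallyEq_set]
    have hB : ∀ᵐ x ∂(Measure.pi ν), ∀ i, x i ∈ Set.Ioo (0:ℝ) 1 := by
      rw [ae_iff]
      convert hbox using 2
      ext x; simp [Set.mem_pi]
    filter_upwards [hB] with x hx
    simp only [hS', hS, Set.mem_setOf_eq, hq]
    exact forall_congr' fun j => imp_congr_right fun _ =>
      racing_key (hp k) (hp j) (hx k) (hx j)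
  rw [measure_congr hae]
  -- compute pi ν S via Fubini over coordinate k
  have hMP := measurePreserving_piFinSuccAbove ν k
  set T : Set (ℝ × (Fin n → ℝ)) :=
    {z | ∀ j' : Fin n, z.2 j' < z.1 ^ q (k.succAbove j')} with hT
  have hTmeas : MeasurableSet T := by
    have : T = ⋂ j' : Fin n, {z : ℝ × (Fin n → ℝ) | z.2 j' < z.1 ^ q (k.succAbove j')} := by
      ext z; simp [hT]
    rw [this]
    exact MeasurableSet.iInter fun j' => measurableSet_lt (by fun_prop) (by fun_prop)
  have hpre : (MeasurableEquiv.piFinSuccAbove (fun _ : Fin (n+1) => ℝ) k) ⁻¹' T = S := by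
    ext x
    have hx : (MeasurableEquiv.piFinSuccAbove (fun _ : Fin (n+1) => ℝ) k) x
        = (x k, fun j' => x (k.succAbove j')) := by
      rfl
    simp only [Set.mem_preimage, hx, hT, hS, Set.mem_setOf_eq]
    constructor
    · intro h j hj
      obtain ⟨j', hj'⟩ := Fin.exists_succAbove_eq (Ne.symm (Ne.symm hj))
      rw [← hj']
      exact h j'
    · intro h j'
      exact h _ (k.succAbove_ne j')
  have hpiS : Measure.pi ν S = ((ν k).prod (Measure.pi fun j => ν (k.succAbove j))) T := by
    rw [← hpre]
    exact hMP.measure_preimage hTmeas.nullMeasurableSet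
  rw [hpiS, Measure.prod_apply hTmeas]
  set Q : ℝ := ∑ j' : Fin n, q (k.succAbove j') with hQ
  have hq0 : ∀ j, 0 ≤ q j := fun j => le_of_lt (div_pos (hp j) (hp k))
  have hQ0 : 0 ≤ Q := Finset.sum_nonneg fun j _ => hq0 _
  have hslice : ∀ u ∈ Set.Ioo (0:ℝ) 1,
      (Measure.pi fun j => ν (k.succAbove j)) (Prod.mk u ⁻¹' T) = ENNReal.ofReal (u ^ Q) := by
    intro u hu
    have h1 : Prod.mk u ⁻¹' T = Set.pi Set.univ fun j' => Set.Iio (u ^ q (k.succAbove j')) := by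
      ext y; simp [hT, Set.mem_pi]
    rw [h1, Measure.pi_pi]
    have h2 : ∀ j' : Fin n, ν (k.succAbove j') (Set.Iio (u ^ q (k.succAbove j')))
        = ENNReal.ofReal (u ^ q (k.succAbove j')) := by
      intro j'
      have hc1 : (0:ℝ) < u ^ q (k.succAbove j') := Real.rpow_pos_of_pos hu.1 _
      have hc2 : u ^ q (k.succAbove j') ≤ 1 := Real.rpow_le_one hu.1.le hu.2.le (hq0 _)
      rw [hν]
      rw [Measure.restrict_apply measurableSet_Iio]
      have heq : Set.Iio (u ^ q (k.succAbove j')) ∩ Set.Ioo (0:ℝ) 1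
          = Set.Ioo 0 (u ^ q (k.succAbove j')) := by
        ext x
        constructor
        · rintro ⟨hx1, hx2, hx3⟩; exact ⟨hx2, hx1⟩
        · rintro ⟨hx1, hx2⟩; exact ⟨hx2, hx1, lt_of_lt_of_le hx2 hc2⟩
      rw [heq, Real.volume_Ioo]
      norm_num
    rw [Finset.prod_congr rfl fun j' _ => h2 j',
      ← ENNReal.ofReal_prod_of_nonneg (fun j' _ => (Real.rpow_pos_of_pos hu.1 _).le)]
    congr 1
    have h3 : ∀ j' : Fin n, u ^ q (k.succAbove j')
        = Real.exp (Real.log u * q (k.succAbove j')) :=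
      fun _ => Real.rpow_def_of_pos hu.1 _
    simp_rw [h3]
    rw [← Real.exp_sum, ← Finset.mul_sum, ← Real.rpow_def_of_pos hu.1]
  have hLI : ∫⁻ u, (Measure.pi fun j => ν (k.succAbove j)) (Prod.mk u ⁻¹' T) ∂(ν k)
      = ∫⁻ u in Set.Ioo (0:ℝ) 1, ENNReal.ofReal (u ^ Q) ∂volume :=
    setLIntegral_congr_fun measurableSet_Ioo
      (fun u hu => hslice u hu)
  rw [hLI]
  have hint : IntegrableOn (fun u : ℝ => u ^ Q) (Set.Ioo 0 1) volume :=
    (intervalIntegral.intervalIntegrable_rpow (r := Q) (a := 0) (b := 1) (Or.inl hQ0)).1.mono_set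
      Set.Ioo_subset_Ioc_self
  rw [← ofReal_integral_eq_lintegral_ofReal hint
    ((ae_restrict_iff' measurableSet_Ioo).2 (Filter.Eventually.of_forall
      fun u hu => Real.rpow_nonneg hu.1.le _))]
  congr 1
  rw [← integral_Ioc_eq_integral_Ioo, ← intervalIntegral.integral_of_le zero_le_one,
    integral_rpow (Or.inl (by linarith : (-1:ℝ) < Q)),
    Real.one_rpow, Real.zero_rpow (by positivity)]
  have hsum : ∑ j, p j = p k + ∑ j' : Fin n, p (k.succAbove j') := Fin.sum_univ_succAbove p k
  have hQval : Q = (∑ j' : Fin n, p (k.succAbove j')) / p k := by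
    rw [hQ, ← Finset.sum_div]
  have hS0 : 0 ≤ ∑ j' : Fin n, p (k.succAbove j') :=
    Finset.sum_nonneg fun j _ => (hp _).le
  rw [hsum, hQval]
  have hk := (hp k).ne'
  field_simp
  ring
end

section
/- Let Y be a finite nonempty set, ε > 0, and let p, q be probability mass functions on Y such that p(y) ≤ e^ε·q(y) and q(y) ≤ e^ε·p(y) for every y ∈ Y. Then for every α > 1, the Rényi divergence of order α satisfies (1/(α−1)) · ln( ∑_{y ∈ Y, q(y) > 0} p(y)^α · q(y)^{1−α} ) ≤ (ε²/2)·α. That is, if an algorithm is ε-differentially private then it is (ε²/2)-concentrated differentially private (zCDP). -/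
open scoped Classical
open Finset


/-- `sinh x - sinh y = 2 cosh((x+y)/2) sinh((x-y)/2)`. -/
lemma my_sinh_sub_sinh (x y : ℝ) :
    Real.sinh x - Real.sinh y =
      2 * Real.cosh ((x + y) / 2) * Real.sinh ((x - y) / 2) := by
  have h1 : Real.exp x = Real.exp ((x + y) / 2) * Real.exp ((x - y) / 2) := by
    rw [← Real.exp_add]; ring_nf
  have h2 : Real.exp y = Real.exp ((x + y) / 2) * Real.exp (-((x - y) / 2)) := by
    rw [← Real.exp_add]; ring_nf
  have h3 : Real.exp (-x) = Real.exp (-((x + y) / 2)) * Real.exp (-((x - y) / 2)) := by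
    rw [← Real.exp_add]; ring_nf
  have h4 : Real.exp (-y) = Real.exp (-((x + y) / 2)) * Real.exp ((x - y) / 2) := by
    rw [← Real.exp_add]; ring_nf
  rw [Real.sinh_eq, Real.sinh_eq, Real.sinh_eq, Real.cosh_eq, h1, h2, h3, h4]
  ring

/-- `sinh x ≤ x * cosh x` for `0 ≤ x`. -/
lemma my_sinh_le (x : ℝ) (hx : 0 ≤ x) : Real.sinh x ≤ x * Real.cosh x := by
  have hmono : MonotoneOn (fun t => t * Real.cosh t - Real.sinh t) (Set.Ici (0:ℝ)) := by
    apply monotoneOn_of_deriv_nonneg (convex_Ici 0)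
    · fun_prop
    · fun_prop
    · intro t ht
      rw [interior_Ici] at ht
      have : deriv (fun t => t * Real.cosh t - Real.sinh t) t = t * Real.sinh t := by
        rw [deriv_fun_sub (by fun_prop) (by fun_prop), deriv_fun_mul (by fun_prop) (by fun_prop)]
        simp [Real.deriv_cosh, Real.deriv_sinh]
      rw [this]
      exact mul_nonneg (le_of_lt ht) (Real.sinh_nonneg_iff.2 (le_of_lt ht))
  have := hmono (Set.self_mem_Ici) (Set.mem_Ici.2 hx) hx
  simp at this
  linarith

/-- `cosh t ≤ cosh s * exp ((t² - s²)/2)` for `0 ≤ s ≤ t`. -/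
lemma my_cosh_le (s t : ℝ) (hs : 0 ≤ s) (hst : s ≤ t) :
    Real.cosh t ≤ Real.cosh s * Real.exp ((t ^ 2 - s ^ 2) / 2) := by
  have hmono : MonotoneOn (fun x => x ^ 2 / 2 - Real.log (Real.cosh x)) (Set.Ici (0:ℝ)) := by
    apply monotoneOn_of_deriv_nonneg (convex_Ici 0)
    · apply Continuous.continuousOn; fun_prop (disch := intro x; exact (Real.cosh_pos x).ne')
    · intro x hx
      apply DifferentiableAt.differentiableWithinAt
      apply DifferentiableAt.sub
      · fun_prop
      · exact (Real.differentiableAt_cosh.log (Real.cosh_pos _).ne')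
    · intro x hx
      rw [interior_Ici] at hx
      have hd : deriv (fun x => x ^ 2 / 2 - Real.log (Real.cosh x)) x
          = x - Real.sinh x / Real.cosh x := by
        rw [deriv_fun_sub (by fun_prop) (Real.differentiableAt_cosh.log (Real.cosh_pos _).ne')]
        rw [deriv.log Real.differentiableAt_cosh (Real.cosh_pos _).ne']
        simp [Real.deriv_cosh]
      rw [hd, sub_nonneg, div_le_iff₀ (Real.cosh_pos _)]
      exact my_sinh_le x (le_of_lt hx)
  have key := hmono (Set.mem_Ici.2 hs) (Set.mem_Ici.2 (hs.trans hst)) hst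
  simp only at key
  have hc1 : (0:ℝ) < Real.cosh s := Real.cosh_pos _
  have hc2 : (0:ℝ) < Real.cosh t := Real.cosh_pos _
  have : Real.log (Real.cosh t) ≤ Real.log (Real.cosh s) + (t ^ 2 - s ^ 2) / 2 := by linarith
  calc Real.cosh t = Real.exp (Real.log (Real.cosh t)) := (Real.exp_log hc2).symm
    _ ≤ Real.exp (Real.log (Real.cosh s) + (t ^ 2 - s ^ 2) / 2) := Real.exp_le_exp.2 this
    _ = Real.cosh s * Real.exp ((t ^ 2 - s ^ 2) / 2) := by
        rw [Real.exp_add, Real.exp_log hc1]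

/-- The scalar inequality at the heart of pure DP ⇒ zCDP. -/
lemma my_key_ineq (ε α : ℝ) (hε : 0 < ε) (hα : 1 < α) :
    (Real.exp ε - 1) * Real.exp (-ε) ^ α + (1 - Real.exp (-ε)) * Real.exp ε ^ α ≤
      (Real.exp ε - Real.exp (-ε)) * Real.exp (ε ^ 2 / 2 * α * (α - 1)) := by
  rw [← Real.exp_mul, ← Real.exp_mul]
  have h1 : Real.exp ε * Real.exp (-ε * α) = Real.exp (-(ε * (α - 1))) := by
    rw [← Real.exp_add]; ring_nf
  have h2 : Real.exp (-ε) * Real.exp (ε * α) = Real.exp (ε * (α - 1)) := by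
    rw [← Real.exp_add]; ring_nf
  have lhs_eq : (Real.exp ε - 1) * Real.exp (-ε * α) + (1 - Real.exp (-ε)) * Real.exp (ε * α)
      = 2 * (Real.sinh (ε * α) - Real.sinh (ε * (α - 1))) := by
    rw [Real.sinh_eq, Real.sinh_eq]
    have h0 : Real.exp (-ε * α) = Real.exp (-(ε * α)) := by ring_nf
    linear_combination h1 - h2 - h0
  have rhs_eq : Real.exp ε - Real.exp (-ε) = 2 * Real.sinh ε := by rw [Real.sinh_eq]; ring
  rw [lhs_eq, rhs_eq]
  have hsub := my_sinh_sub_sinh (ε * α) (ε * (α - 1))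
  have hsub2 := my_sinh_sub_sinh ε 0
  simp only [Real.sinh_zero, sub_zero, add_zero, sub_zero] at hsub2
  have e1 : (ε * α + ε * (α - 1)) / 2 = ε * (2 * α - 1) / 2 := by ring
  have e2 : (ε * α - ε * (α - 1)) / 2 = ε / 2 := by ring
  rw [e1, e2] at hsub
  rw [hsub, hsub2]
  have hs : (0:ℝ) < Real.sinh (ε / 2) := Real.sinh_pos_iff.2 (by linarith)
  have hcosh := my_cosh_le (ε / 2) (ε * (2 * α - 1) / 2) (by linarith)
    (by rw [div_le_div_iff₀ (by norm_num) (by norm_num)]; nlinarith)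
  have hexp : ((ε * (2 * α - 1) / 2) ^ 2 - (ε / 2) ^ 2) / 2 = ε ^ 2 / 2 * α * (α - 1) := by ring
  rw [hexp] at hcosh
  nlinarith [Real.exp_pos (ε ^ 2 / 2 * α * (α - 1)), Real.cosh_pos (ε / 2)]

/-- Chord bound for the convex function `x ↦ x^α` on `[a, b]`. -/
lemma my_chord (α a b r : ℝ) (hα : 1 ≤ α) (ha : 0 ≤ a) (hab : a < b) (h1 : a ≤ r)
    (h2 : r ≤ b) : r ^ α ≤ ((b - r) * a ^ α + (r - a) * b ^ α) / (b - a) := by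
  have hba : (0:ℝ) < b - a := by linarith
  have hc := convexOn_rpow hα
  have hkey := hc.2 (Set.mem_Ici.2 ha) (Set.mem_Ici.2 (by linarith : (0:ℝ) ≤ b))
    (div_nonneg (by linarith) hba.le) (div_nonneg (by linarith) hba.le)
    (by field_simp; ring : (b - r) / (b - a) + (r - a) / (b - a) = 1)
  simp only [smul_eq_mul] at hkey
  have harg : (b - r) / (b - a) * a + (r - a) / (b - a) * b = r := by field_simp; ring
  rw [harg] at hkey
  calc r ^ α ≤ (b - r) / (b - a) * a ^ α + (r - a) / (b - a) * b ^ α := hkey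
    _ = ((b - r) * a ^ α + (r - a) * b ^ α) / (b - a) := by ring

/-- Pure DP implies zCDP: if probability mass functions `p, q` on a finite set satisfy the
pointwise `ε`-DP bounds `p(y) ≤ e^ε·q(y)` and `q(y) ≤ e^ε·p(y)`, then for every `α > 1` the
Rényi divergence satisfies `D_α(p‖q) ≤ (ε²/2)·α`. -/
theorem pureDP_to_zCDP {Y : Type*} [Fintype Y] [Nonempty Y] (ε : ℝ) (hε : 0 < ε)
    (p q : Y → ℝ) (hp0 : ∀ y, 0 ≤ p y) (hq0 : ∀ y, 0 ≤ q y)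
    (hp1 : ∑ y, p y = 1) (hq1 : ∑ y, q y = 1)
    (hpq : ∀ y, p y ≤ Real.exp ε * q y) (hqp : ∀ y, q y ≤ Real.exp ε * p y)
    (α : ℝ) (hα : 1 < α) :
    (1 / (α - 1)) * Real.log (∑ y ∈ Finset.univ.filter (fun y : Y => 0 < q y),
        p y ^ α * q y ^ (1 - α)) ≤ (ε ^ 2 / 2) * α := by
  set a := Real.exp (-ε) with ha_def
  set b := Real.exp ε with hb_def
  have ha : (0:ℝ) < a := Real.exp_pos _
  have hb : (0:ℝ) < b := Real.exp_pos _
  have hab : a < b := Real.exp_lt_exp.2 (by linarith)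
  have hab1 : a * b = 1 := by rw [ha_def, hb_def, ← Real.exp_add]; simp
  set T := Finset.univ.filter (fun y : Y => 0 < q y) with hT_def
  have hqT : ∀ y ∈ T, 0 < q y := fun y hy => (Finset.mem_filter.1 hy).2
  have hpT : ∀ y ∈ T, 0 < p y := by
    intro y hy
    by_contra h
    push_neg at h
    have hp : p y = 0 := le_antisymm h (hp0 y)
    have := hqp y
    rw [hp] at this
    simp at this
    exact absurd (hqT y hy) (by linarith)
  have hq_zero : ∀ y ∉ T, q y = 0 := by
    intro y hy
    rw [hT_def] at hy
    simp only [Finset.mem_filter, Finset.mem_univ, true_and, not_lt] at hy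
    exact le_antisymm hy (hq0 y)
  have hp_zero : ∀ y ∉ T, p y = 0 := by
    intro y hy
    have := hpq y
    rw [hq_zero y hy] at this
    simp at this
    exact le_antisymm this (hp0 y)
  have hsum_q : ∑ y ∈ T, q y = 1 := by
    rw [← hq1]
    exact (Finset.sum_subset (Finset.filter_subset _ _)
      (fun y _ hy => hq_zero y hy)).symm ▸ rfl
  have hsum_p : ∑ y ∈ T, p y = 1 := by
    rw [← hp1]
    exact Finset.sum_subset (Finset.filter_subset _ _) (fun y _ hy => hp_zero y hy)
  -- ratio bounds
  have hr_lb : ∀ y ∈ T, a ≤ p y / q y := by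
    intro y hy
    rw [le_div_iff₀ (hqT y hy)]
    have := hqp y
    calc a * q y ≤ a * (b * p y) := by
          apply mul_le_mul_of_nonneg_left this ha.le
      _ = p y := by rw [← mul_assoc, hab1, one_mul]
  have hr_ub : ∀ y ∈ T, p y / q y ≤ b := by
    intro y hy
    rw [div_le_iff₀ (hqT y hy)]
    exact hpq y
  -- rewrite terms
  have hterm : ∀ y ∈ T, p y ^ α * q y ^ (1 - α) = q y * (p y / q y) ^ α := by
    intro y hy
    have hq := hqT y hy
    rw [Real.div_rpow (hp0 y) hq.le, Real.rpow_sub hq, Real.rpow_one]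
    have hqα : q y ^ α ≠ 0 := (Real.rpow_pos_of_pos hq α).ne'
    field_simp
  have hqr : ∀ y ∈ T, q y * (p y / q y) = p y := by
    intro y hy
    exact mul_div_cancel₀ _ (hqT y hy).ne'
  -- the sum bound
  set S := ∑ y ∈ T, p y ^ α * q y ^ (1 - α) with hS_def
  have hS_pos : 0 < S := by
    have hne : T.Nonempty := by
      by_contra h
      rw [Finset.not_nonempty_iff_eq_empty] at h
      have : ∑ y, q y = 0 := Finset.sum_eq_zero (fun y _ => hq_zero y (by simp [h]))
      rw [hq1] at this; norm_num at this
    apply Finset.sum_pos _ hne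
    intro y hy
    exact mul_pos (Real.rpow_pos_of_pos (hpT y hy) _) (Real.rpow_pos_of_pos (hqT y hy) _)
  have hS_le : S ≤ ((b - 1) * a ^ α + (1 - a) * b ^ α) / (b - a) := by
    have hba : (0:ℝ) < b - a := by linarith
    calc S = ∑ y ∈ T, q y * (p y / q y) ^ α := Finset.sum_congr rfl hterm
      _ ≤ ∑ y ∈ T, q y * (((b - p y / q y) * a ^ α + (p y / q y - a) * b ^ α) / (b - a)) := by
          apply Finset.sum_le_sum
          intro y hy
          exact mul_le_mul_of_nonneg_left
            (my_chord α a b _ hα.le ha.le hab (hr_lb y hy) (hr_ub y hy)) (hq0 y)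
      _ = ∑ y ∈ T, ((q y * b - p y) * a ^ α + (p y - q y * a) * b ^ α) / (b - a) := by
          apply Finset.sum_congr rfl
          intro y hy
          rw [show q y * (((b - p y / q y) * a ^ α + (p y / q y - a) * b ^ α) / (b - a))
              = ((q y * b - q y * (p y / q y)) * a ^ α
                + (q y * (p y / q y) - q y * a) * b ^ α) / (b - a) from by ring, hqr y hy]
      _ = ((b - 1) * a ^ α + (1 - a) * b ^ α) / (b - a) := by
          rw [← Finset.sum_div]
          congr 1
          rw [Finset.sum_add_distrib, ← Finset.sum_mul, ← Finset.sum_mul,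
            Finset.sum_sub_distrib, Finset.sum_sub_distrib, ← Finset.sum_mul, ← Finset.sum_mul,
            hsum_q, hsum_p]
          ring
  have hfinal : S ≤ Real.exp (ε ^ 2 / 2 * α * (α - 1)) := by
    have hba : (0:ℝ) < b - a := by linarith
    apply hS_le.trans
    rw [div_le_iff₀ hba]
    have := my_key_ineq ε α hε hα
    rw [← ha_def, ← hb_def] at this
    linarith
  have hlog : Real.log S ≤ ε ^ 2 / 2 * α * (α - 1) :=
    (Real.log_le_iff_le_exp hS_pos).2 hfinal
  have hα1 : (0:ℝ) < α - 1 := by linarith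
  calc (1 / (α - 1)) * Real.log S ≤ (1 / (α - 1)) * (ε ^ 2 / 2 * α * (α - 1)) := by
        apply mul_le_mul_of_nonneg_left hlog (by positivity)
    _ = ε ^ 2 / 2 * α := by field_simp
end

section
/- Let Y_1, Y_2 be finite nonempty sets, and for i = 1, 2 let p_i, q_i be probability mass functions on Y_i with the support of p_i contained in the support of q_i, and let ρ_i ≥ 0. Suppose that for all α > 1 and i = 1, 2, (1/(α−1))·ln(∑_{y : q_i(y)>0} p_i(y)^α q_i(y)^{1−α}) ≤ ρ_i·α. Then the product mass functions p_1 ⊗ p_2 and q_1 ⊗ q_2 on Y_1 × Y_2 (where (p_1 ⊗ p_2)(y_1,y_2) = p_1(y_1)·p_2(y_2)) satisfy, for all α > 1, (1/(α−1))·ln(∑_{(y_1,y_2) : q_1(y_1)q_2(y_2)>0} (p_1(y_1)p_2(y_2))^α (q_1(y_1)q_2(y_2))^{1−α}) ≤ (ρ_1 + ρ_2)·α. That is, the composition of a ρ_1-zCDP algorithm with a ρ_2-zCDP algorithm is (ρ_1 + ρ_2)-zCDP. -/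
open scoped Classical
open Finset

lemma zCDP_sum_pos {Y : Type*} [Fintype Y] (p q : Y → ℝ) (α : ℝ)
    (hp0 : ∀ y, 0 ≤ p y) (hq0 : ∀ y, 0 ≤ q y)
    (hp1 : ∑ y, p y = 1) (hsupp : ∀ y, q y = 0 → p y = 0) :
    0 < ∑ y ∈ Finset.univ.filter (fun y => 0 < q y), p y ^ α * q y ^ (1 - α) := by
  obtain ⟨y, hy⟩ : ∃ y, 0 < p y := by
    by_contra h
    push_neg at h
    have : ∀ y, p y = 0 := fun y => le_antisymm (h y) (hp0 y)
    simp [this] at hp1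
  have hqy : 0 < q y := by
    rcases (hq0 y).lt_or_eq with h | h
    · exact h
    · exact absurd (hsupp y h.symm) (ne_of_gt hy)
  apply Finset.sum_pos'
  · intro i hi
    exact mul_nonneg (Real.rpow_nonneg (hp0 i) _)
      (Real.rpow_nonneg ((Finset.mem_filter.mp hi).2.le) _)
  · exact ⟨y, Finset.mem_filter.mpr ⟨Finset.mem_univ _, hqy⟩,
      mul_pos (Real.rpow_pos_of_pos hy α) (Real.rpow_pos_of_pos hqy (1 - α))⟩

/-- Composition of zCDP: if, for `i = 1, 2`, the probability mass functions `pᵢ, qᵢ` on the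
finite set `Yᵢ` satisfy `D_α(pᵢ‖qᵢ) ≤ ρᵢ·α` for all `α > 1`, then the product mass functions
satisfy `D_α(p₁ ⊗ p₂ ‖ q₁ ⊗ q₂) ≤ (ρ₁ + ρ₂)·α` for all `α > 1`. -/
theorem zCDP_composition {Y₁ Y₂ : Type*} [Fintype Y₁] [Fintype Y₂]
    [Nonempty Y₁] [Nonempty Y₂]
    (p₁ q₁ : Y₁ → ℝ) (p₂ q₂ : Y₂ → ℝ) (ρ₁ ρ₂ : ℝ) (hρ₁ : 0 ≤ ρ₁) (hρ₂ : 0 ≤ ρ₂)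
    (hp₁0 : ∀ y, 0 ≤ p₁ y) (hq₁0 : ∀ y, 0 ≤ q₁ y)
    (hp₂0 : ∀ y, 0 ≤ p₂ y) (hq₂0 : ∀ y, 0 ≤ q₂ y)
    (hp₁1 : ∑ y, p₁ y = 1) (hq₁1 : ∑ y, q₁ y = 1)
    (hp₂1 : ∑ y, p₂ y = 1) (hq₂1 : ∑ y, q₂ y = 1)
    (hsupp₁ : ∀ y, q₁ y = 0 → p₁ y = 0) (hsupp₂ : ∀ y, q₂ y = 0 → p₂ y = 0)
    (h₁ : ∀ α : ℝ, 1 < α →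
      (1 / (α - 1)) * Real.log (∑ y ∈ Finset.univ.filter (fun y : Y₁ => 0 < q₁ y),
        p₁ y ^ α * q₁ y ^ (1 - α)) ≤ ρ₁ * α)
    (h₂ : ∀ α : ℝ, 1 < α →
      (1 / (α - 1)) * Real.log (∑ y ∈ Finset.univ.filter (fun y : Y₂ => 0 < q₂ y),
        p₂ y ^ α * q₂ y ^ (1 - α)) ≤ ρ₂ * α)
    (α : ℝ) (hα : 1 < α) :
    (1 / (α - 1)) * Real.log
        (∑ y ∈ Finset.univ.filter (fun y : Y₁ × Y₂ => 0 < q₁ y.1 * q₂ y.2),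
          (p₁ y.1 * p₂ y.2) ^ α * (q₁ y.1 * q₂ y.2) ^ (1 - α))
      ≤ (ρ₁ + ρ₂) * α := by

  set S₁ := ∑ y ∈ Finset.univ.filter (fun y : Y₁ => 0 < q₁ y), p₁ y ^ α * q₁ y ^ (1 - α) with hS₁
  set S₂ := ∑ y ∈ Finset.univ.filter (fun y : Y₂ => 0 < q₂ y), p₂ y ^ α * q₂ y ^ (1 - α) with hS₂
  have hS₁pos : 0 < S₁ := by rw [hS₁]; exact zCDP_sum_pos p₁ q₁ α hp₁0 hq₁0 hp₁1 hsupp₁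
  have hS₂pos : 0 < S₂ := by rw [hS₂]; exact zCDP_sum_pos p₂ q₂ α hp₂0 hq₂0 hp₂1 hsupp₂
  have hfilter : Finset.univ.filter (fun y : Y₁ × Y₂ => 0 < q₁ y.1 * q₂ y.2)
      = (Finset.univ.filter (fun y : Y₁ => 0 < q₁ y)) ×ˢ
        (Finset.univ.filter (fun y : Y₂ => 0 < q₂ y)) := by
    ext ⟨a, b⟩
    simp only [Finset.mem_filter, Finset.mem_univ, true_and, Finset.mem_product]
    constructor
    · intro h
      rcases mul_pos_iff.mp h with ⟨h1, h2⟩ | ⟨h1, h2⟩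
      · exact ⟨h1, h2⟩
      · exact absurd h1 (not_lt.mpr (hq₁0 a))
    · rintro ⟨h1, h2⟩; exact mul_pos h1 h2
  have hprod : (∑ y ∈ Finset.univ.filter (fun y : Y₁ × Y₂ => 0 < q₁ y.1 * q₂ y.2),
      (p₁ y.1 * p₂ y.2) ^ α * (q₁ y.1 * q₂ y.2) ^ (1 - α)) = S₁ * S₂ := by
    rw [hfilter, Finset.sum_product, hS₁, hS₂, Finset.sum_mul_sum]
    refine Finset.sum_congr rfl fun a ha => Finset.sum_congr rfl fun b hb => ?_
    rw [Real.mul_rpow (hp₁0 a) (hp₂0 b), Real.mul_rpow (hq₁0 a) (hq₂0 b)]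
    ring
  rw [hprod, Real.log_mul (ne_of_gt hS₁pos) (ne_of_gt hS₂pos), mul_add, add_mul]
  exact add_le_add (h₁ α hα) (h₂ α hα)
end
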